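/- arXiv:2603.11302 — 3 statements merged into one kernel-verified Lean document; each statement's English description precedes it below -/
import Mathlib

section
/- Let S ⊆ ℝⁿ be a nonempty closed set and r > 0. Then S is r-prox-regular if and only if on the set U_r := {x ∈ ℝⁿ : d_S(x) < r} the metric projection Π_S is single-valued; moreover, if S is r-prox-regular then for every s ∈ (0, r) one has |Π_S(x) − Π_S(y)| ≤ (1/(1 − s/r))|x − y| for all x, y ∈ U_s := {x : d_S(x) < s}, so Π_S is Lipschitz continuous on each U_s with s < r. -/
open Metric Set

noncomputable section

abbrev Euc (n : ℕ) := EuclideanSpace ℝ (Fin n)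

/-- The metric projection `Π_S(x) = {y ∈ S : |x − y| = d_S(x)}`. -/
def projSet {n : ℕ} (S : Set (Euc n)) (x : Euc n) : Set (Euc n) :=
  {y ∈ S | dist x y = Metric.infDist x S}

/-- The proximal normal cone `N^P_S(xbar) = {η : ∃ σ > 0, xbar ∈ Π_S(xbar + σ η)}`. -/
def proxNormalCone {n : ℕ} (S : Set (Euc n)) (xbar : Euc n) : Set (Euc n) :=
  {η | ∃ σ > (0 : ℝ), xbar ∈ projSet S (xbar + σ • η)}

/-- `S` is `r`-prox-regular. -/
def IsProxRegular {n : ℕ} (r : ℝ) (S : Set (Euc n)) : Prop :=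
  ∀ xbar ∈ S, ∀ η ∈ proxNormalCone S xbar, ‖η‖ = 1 →
    ∀ s : ℝ, 0 < s → s ≤ r → xbar ∈ projSet S (xbar + s • η)

/-!
For `a ∈ S`, the point `a` is a projection of `a + w` iff `2⟪w, z - a⟫ ≤ ‖z - a‖²` for all
`z ∈ S`. Applied at `p ∈ Π_S(x)` in the direction of `x - p`, prox-regularity gives
`2r⟪x - p, z - p⟫ ≤ d_S(x) ‖z - p‖²`; adding this inequality for `(x, p_x, p_y)` and
`(y, p_y, p_x)` yields `(2r - d_S(x) - d_S(y)) |p_x - p_y| ≤ 2r |x - y|`, which contains both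
the uniqueness of projections on `U_r` (take `x = y`) and the Lipschitz bound on `U_s`.

Conversely, if projections are unique on `U_r` they vary continuously, so `d_S` grows at unit
rate when one moves away from the projection. Hence `M(t) = max {d_S(y) : |y - q| ≤ t}` has
`M(t) - t` nondecreasing while `M < r` (a Dini-derivative argument). If `a` is the projection
of `q = a + μη`, a maximiser at radius `ε` has `d_S = μ + ε`, which by the equality case of
the triangle inequality forces it to be `a + (μ + ε)η`. So the set of `t` for which `a` is a
projection of `a + tη` extends to the right up to `r`, and continuous induction concludes.
-/

open Filter Topology RealInnerProductSpace

section InnerProductSpace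

variable {E : Type*} [NormedAddCommGroup E] [InnerProductSpace ℝ E]

theorem norm_le_dist_add_iff (a w z : E) :
    ‖w‖ ≤ dist (a + w) z ↔ 2 * ⟪w, z - a⟫ ≤ ‖z - a‖ ^ 2 := by
  have hd : dist (a + w) z = ‖w - (z - a)‖ := by
    rw [dist_eq_norm]; congr 1; abel
  rw [hd, ← sq_le_sq₀ (norm_nonneg _) (norm_nonneg _), norm_sub_sq_real]
  constructor <;> intro h <;> linarith

theorem le_norm_add_smul {u g : E} (hg : ‖g‖ = 1) {d δ h : ℝ} (hd : 0 < d) (hδ : 0 ≤ δ)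
    (hh : 0 ≤ h) (hu : d ≤ ‖u‖) (hug : d - δ ≤ ⟪u, g⟫) :
    d + h - 2 * h * δ / d ≤ ‖u + h • g‖ := by
  have hsq : (d + h) ^ 2 - 2 * h * δ ≤ ‖u + h • g‖ ^ 2 := by
    rw [norm_add_sq_real, real_inner_smul_right, norm_smul, Real.norm_eq_abs, abs_of_nonneg hh,
      hg]
    nlinarith
  rw [sub_le_iff_le_add, ← sub_le_iff_le_add', le_div_iff₀ hd]
  rcases le_total (d + h) ‖u + h • g‖ with hle | hlt
  · nlinarith
  · nlinarith [norm_nonneg (u + h • g)]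

theorem eq_smul_of_norm_le_of_le_norm_add_smul {u v : E} (hv : ‖v‖ = 1) {μ ε : ℝ} (hμ : 0 < μ)
    (hu : ‖u‖ ≤ ε) (h : μ + ε ≤ ‖u + μ • v‖) : u = ε • v := by
  have hε : 0 ≤ ε := (norm_nonneg u).trans hu
  have hinner : ε ≤ ⟪u, v⟫ := by
    have := pow_le_pow_left₀ (by positivity) h 2
    rw [norm_add_sq_real, real_inner_smul_right, norm_smul, Real.norm_eq_abs, abs_of_pos hμ,
      hv] at this
    nlinarith [norm_nonneg u]
  have hsq : ‖u - ε • v‖ ^ 2 ≤ 0 := by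
    rw [norm_sub_sq_real, real_inner_smul_right, norm_smul, Real.norm_eq_abs, abs_of_nonneg hε,
      hv]
    nlinarith [norm_nonneg u]
  rw [← sub_eq_zero, ← norm_eq_zero]
  exact pow_eq_zero_iff two_ne_zero |>.mp (le_antisymm hsq (sq_nonneg _))

end InnerProductSpace

variable {n : ℕ} {S : Set (Euc n)}

theorem projSet_nonempty (hcl : IsClosed S) (hne : S.Nonempty) (x : Euc n) :
    (projSet S x).Nonempty := by
  obtain ⟨y, hy, hd⟩ := hcl.exists_infDist_eq_dist hne x
  exact ⟨y, hy, hd.symm⟩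

theorem mem_projSet_add_iff {a : Euc n} (ha : a ∈ S) (w : Euc n) :
    a ∈ projSet S (a + w) ↔ ∀ z ∈ S, 2 * ⟪w, z - a⟫ ≤ ‖z - a‖ ^ 2 := by
  have hdist : dist (a + w) a = ‖w‖ := by simp [dist_eq_norm]
  simp only [projSet, mem_ofPred_eq, ha, true_and, hdist, ← norm_le_dist_add_iff a w]
  rw [← le_infDist ⟨a, ha⟩]
  exact ⟨le_of_eq, fun h => le_antisymm h (hdist ▸ infDist_le_dist_of_mem ha)⟩

theorem mem_projSet_add_smul {a w : Euc n} (ha : a ∈ S) (haw : a ∈ projSet S (a + w)) {c : ℝ}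
    (hc₀ : 0 ≤ c) (hc₁ : c ≤ 1) : a ∈ projSet S (a + c • w) := by
  rw [mem_projSet_add_iff ha] at haw ⊢
  intro z hz
  have := haw z hz
  rw [real_inner_smul_left]
  rcases le_total 0 ⟪w, z - a⟫ with hpos | hneg
  · nlinarith
  · nlinarith [sq_nonneg ‖z - a‖]

theorem IsProxRegular.inner_le {r : ℝ} (hpr : IsProxRegular r S) (hr : 0 < r) {x p : Euc n}
    (hp : p ∈ projSet S x) {z : Euc n} (hz : z ∈ S) :
    2 * r * ⟪x - p, z - p⟫ ≤ infDist x S * ‖z - p‖ ^ 2 := by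
  have hdist : ‖x - p‖ = infDist x S := by rw [← dist_eq_norm, hp.2]
  rcases (infDist_nonneg (x := x) (s := S)).eq_or_lt with hd | hd
  · rw [← hd, norm_eq_zero.mp (hdist.trans hd.symm)]
    simp
  set η := (infDist x S)⁻¹ • (x - p)
  have hxη : infDist x S • η = x - p := smul_inv_smul₀ hd.ne' _
  have hη : ‖η‖ = 1 := by
    rw [norm_smul, hdist, norm_inv, Real.norm_of_nonneg hd.le, inv_mul_cancel₀ hd.ne']
  have hnormal : η ∈ proxNormalCone S p := ⟨infDist x S, hd, by rwa [hxη, add_sub_cancel]⟩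
  have := (mem_projSet_add_iff hp.1 _).mp (hpr p hp.1 η hnormal hη r hr le_rfl) z hz
  rw [← hxη, real_inner_smul_left]
  rw [real_inner_smul_left] at this
  nlinarith

theorem IsProxRegular.dist_projSet_le {r : ℝ} (hpr : IsProxRegular r S) (hr : 0 < r)
    {x y px py : Euc n} (hpx : px ∈ projSet S x) (hpy : py ∈ projSet S y) :
    (2 * r - (infDist x S + infDist y S)) * dist px py ≤ 2 * r * dist x y := by
  have hx := hpr.inner_le hr hpx hpy.1
  have hy := hpr.inner_le hr hpy hpx.1
  rw [norm_sub_rev py, ← dist_eq_norm] at hx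
  rw [← dist_eq_norm] at hy
  have hsum : ⟪x - px, py - px⟫ + ⟪y - py, px - py⟫ = dist px py ^ 2 - ⟪x - y, px - py⟫ := by
    rw [dist_eq_norm, ← real_inner_self_eq_norm_sq]
    simp only [inner_sub_left, inner_sub_right, real_inner_comm]
    ring
  have hcs : ⟪x - y, px - py⟫ ≤ dist x y * dist px py := by
    rw [dist_eq_norm, dist_eq_norm]; exact real_inner_le_norm _ _
  rcases (dist_nonneg (x := px) (y := py)).eq_or_lt with h0 | hpos
  · rw [← h0, mul_zero]; positivity
  · nlinarith [mul_pos hpos hpos]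

theorem IsProxRegular.existsUnique_mem_projSet {r : ℝ} (hpr : IsProxRegular r S) (hr : 0 < r)
    (hcl : IsClosed S) (hne : S.Nonempty) {x : Euc n} (hx : infDist x S < r) :
    ∃! p, p ∈ projSet S x := by
  obtain ⟨p, hp⟩ := projSet_nonempty hcl hne x
  refine ⟨p, hp, fun q hq => ?_⟩
  have := hpr.dist_projSet_le hr hq hp
  rw [dist_self, mul_zero] at this
  exact dist_le_zero.mp (nonpos_of_mul_nonpos_right this (by linarith))

theorem IsProxRegular.dist_projSet_le_of_infDist_lt {r : ℝ} (hpr : IsProxRegular r S)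
    (hr : 0 < r) {s : ℝ} (hsr : s < r) {x y px py : Euc n} (hx : infDist x S < s)
    (hy : infDist y S < s) (hpx : px ∈ projSet S x) (hpy : py ∈ projSet S y) :
    dist px py ≤ (1 / (1 - s / r)) * dist x y := by
  have h := hpr.dist_projSet_le hr hpx hpy
  have hfactor : 1 / (1 - s / r) = r / (r - s) := by field_simp
  rw [hfactor, div_mul_eq_mul_div, le_div_iff₀ (by linarith)]
  nlinarith [dist_nonneg (x := px) (y := py)]

theorem eventually_forall_projSet_dist_lt (hcl : IsClosed S) {x p : Euc n}
    (hp : ∀ q ∈ projSet S x, q = p) {ε : ℝ} (hε : 0 < ε) :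
    ∀ᶠ y in 𝓝 x, ∀ q ∈ projSet S y, dist q p < ε := by
  set T := S \ ball p ε
  rcases T.eq_empty_or_nonempty with hT | hT
  · refine Eventually.of_forall fun y q hq => ?_
    by_contra hqp
    exact hT.subset ⟨hq.1, fun h => hqp (mem_ball.mp h)⟩
  obtain ⟨z, hzT, hz⟩ := (hcl.sdiff isOpen_ball).exists_infDist_eq_dist hT x
  have hgap : infDist x S < infDist x T := by
    rw [hz]
    refine (infDist_le_dist_of_mem hzT.1).lt_of_ne fun h => hzT.2 ?_
    rw [hp z ⟨hzT.1, h.symm⟩]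
    exact mem_ball_self hε
  filter_upwards [ball_mem_nhds x (half_pos (sub_pos.mpr hgap))] with y hy q hq
  by_contra hqp
  have hqT : q ∈ T := ⟨hq.1, fun h => hqp (mem_ball.mp h)⟩
  have hxq : dist x q ≤ dist x y + infDist y S := hq.2 ▸ dist_triangle x y q
  have hy' : infDist y S ≤ infDist x S + dist y x := infDist_le_infDist_add_dist
  rw [mem_ball] at hy
  linarith [infDist_le_dist_of_mem hqT (x := x), dist_comm x y]

theorem norm_eq_one_of_smul_eq_sub {x p g : Euc n} (hp : p ∈ projSet S x)
    (hx : 0 < infDist x S) (hg : infDist x S • g = x - p) : ‖g‖ = 1 := by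
  have : infDist x S * ‖g‖ = infDist x S := by
    rw [← Real.norm_of_nonneg hx.le, ← norm_smul, hg, ← dist_eq_norm, hp.2,
      Real.norm_of_nonneg hx.le]
  exact (mul_eq_left₀ hx.ne').mp this

theorem le_infDist_add_smul {x p q g : Euc n} (hp : p ∈ projSet S x) (hx : 0 < infDist x S)
    (hg : infDist x S • g = x - p) {h c : ℝ} (hh : 0 ≤ h) (hq : q ∈ projSet S (x + h • g))
    (hqp : dist q p ≤ c * infDist x S / 2) :
    infDist x S + h - c * h ≤ infDist (x + h • g) S := by
  set d := infDist x S
  have hgnorm : ‖g‖ = 1 := norm_eq_one_of_smul_eq_sub hp hx hg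
  have hinner : d - dist q p ≤ ⟪x - q, g⟫ := by
    have hpg : ⟪x - p, g⟫ = d := by
      rw [← hg, real_inner_smul_left, real_inner_self_eq_norm_sq, hgnorm]; ring
    have hqg : -dist q p ≤ ⟪p - q, g⟫ := by
      have := real_inner_le_norm (q - p) g
      rw [hgnorm, mul_one, ← dist_eq_norm] at this
      rw [← neg_sub, inner_neg_left]
      linarith
    rw [show x - q = (x - p) + (p - q) by abel, inner_add_left]
    linarith
  have hgrow := le_norm_add_smul hgnorm hx dist_nonneg hh
    ((infDist_le_dist_of_mem hq.1).trans_eq (dist_eq_norm x q)) hinner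
  have hslack : 2 * h * dist q p / d ≤ c * h := by
    rw [div_le_iff₀ hx]; nlinarith
  rw [← hq.2, dist_eq_norm, show x + h • g - q = (x - q) + h • g by abel]
  linarith

def supInfDistOnBall (S : Set (Euc n)) (q : Euc n) (t : ℝ) : ℝ :=
  sSup ((infDist · S) '' closedBall q t)

section supInfDistOnBall

variable {q : Euc n} {t t' : ℝ}

theorem infDist_le_supInfDistOnBall {y : Euc n} (hy : y ∈ closedBall q t) :
    infDist y S ≤ supInfDistOnBall S q t :=
  le_csSup ((isCompact_closedBall q t).image (continuous_infDist_pt S)).bddAbove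
    (mem_image_of_mem _ hy)

theorem exists_infDist_eq_supInfDistOnBall (ht : 0 ≤ t) :
    ∃ y ∈ closedBall q t, infDist y S = supInfDistOnBall S q t :=
  ((isCompact_closedBall q t).image (continuous_infDist_pt S)).sSup_mem
    ((nonempty_closedBall.mpr ht).image _)

theorem supInfDistOnBall_le (ht : 0 ≤ t) : supInfDistOnBall S q t ≤ infDist q S + t := by
  obtain ⟨y, hy, hmax⟩ := exists_infDist_eq_supInfDistOnBall (S := S) (q := q) ht
  rw [← hmax]
  linarith [infDist_le_infDist_add_dist (x := y) (y := q) (s := S), mem_closedBall.mp hy]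

theorem supInfDistOnBall_mono (ht : 0 ≤ t) (htt' : t ≤ t') :
    supInfDistOnBall S q t ≤ supInfDistOnBall S q t' := by
  obtain ⟨y, hy, hmax⟩ := exists_infDist_eq_supInfDistOnBall (S := S) (q := q) ht
  exact hmax ▸ infDist_le_supInfDistOnBall (closedBall_subset_closedBall htt' hy)

theorem supInfDistOnBall_le_add (ht : 0 ≤ t) (htt' : t ≤ t') :
    supInfDistOnBall S q t' ≤ supInfDistOnBall S q t + (t' - t) := by
  obtain ⟨y, hy, hmax⟩ := exists_infDist_eq_supInfDistOnBall (S := S) (q := q) (ht.trans htt')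
  rw [← add_zero q, ← add_sub_cancel t t',
    ← closedBall_add_closedBall ht (sub_nonneg.mpr htt')] at hy
  obtain ⟨z, hz, w, hw, rfl⟩ := hy
  rw [← hmax]
  have hzw : infDist (z + w) S ≤ infDist z S + dist (z + w) z := infDist_le_infDist_add_dist
  rw [dist_self_add_left, ← dist_zero_right] at hzw
  linarith [infDist_le_supInfDistOnBall (S := S) hz, mem_closedBall.mp hw]

theorem lipschitzOnWith_supInfDistOnBall :
    LipschitzOnWith 1 (supInfDistOnBall S q) (Ici 0) := by
  refine LipschitzOnWith.of_le_add fun t ht t' ht' => ?_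
  rcases le_total t t' with htt' | ht't
  · linarith [supInfDistOnBall_mono (S := S) (q := q) ht htt', dist_nonneg (x := t) (y := t')]
  · linarith [supInfDistOnBall_le_add (S := S) (q := q) ht' ht't, Real.dist_eq t t',
      le_abs_self (t - t')]

end supInfDistOnBall

section UniqueProjection

variable {r : ℝ} (hcl : IsClosed S) (hne : S.Nonempty)
  (Hu : ∀ x : Euc n, infDist x S < r → ∃! p, p ∈ projSet S x)
include hcl hne Hu

theorem eventually_supInfDistOnBall_ge {q : Euc n} {t : ℝ} (ht : 0 ≤ t)
    (hpos : 0 < supInfDistOnBall S q t) (hlt : supInfDistOnBall S q t < r) {c : ℝ} (hc : 0 < c) :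
    ∀ᶠ z in 𝓝[>] t,
      supInfDistOnBall S q t + (z - t) - c * (z - t) ≤ supInfDistOnBall S q z := by
  obtain ⟨x, hx, hmax⟩ := exists_infDist_eq_supInfDistOnBall (S := S) (q := q) ht
  rw [← hmax] at hpos hlt ⊢
  obtain ⟨p, hp, hpu⟩ := Hu x hlt
  set g := (infDist x S)⁻¹ • (x - p)
  have hg : infDist x S • g = x - p := smul_inv_smul₀ hpos.ne' _
  have hray : Tendsto (fun z : ℝ => x + (z - t) • g) (𝓝 t) (𝓝 x) := by
    have hcont : Continuous fun z : ℝ => x + (z - t) • g := by fun_prop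
    simpa using hcont.tendsto t
  have hnear := hray.eventually
    (eventually_forall_projSet_dist_lt hcl hpu (half_pos (mul_pos hc hpos)))
  filter_upwards [nhdsWithin_le_nhds hnear, self_mem_nhdsWithin] with z hz (htz : t < z)
  obtain ⟨q', hq'⟩ := projSet_nonempty hcl hne (x + (z - t) • g)
  have hball : x + (z - t) • g ∈ closedBall q z := by
    rw [mem_closedBall]
    calc dist (x + (z - t) • g) q ≤ dist (x + (z - t) • g) x + dist x q := dist_triangle _ _ _
      _ ≤ (z - t) + t := by
        rw [dist_self_add_left, norm_smul, norm_eq_one_of_smul_eq_sub hp hpos hg, mul_one,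
          Real.norm_of_nonneg (sub_nonneg.mpr (le_of_lt htz))]
        linarith [mem_closedBall.mp hx]
      _ = z := by ring
  exact (le_infDist_add_smul hp hpos hg (sub_nonneg.mpr (le_of_lt htz)) hq'
    (hz q' hq').le).trans (infDist_le_supInfDistOnBall hball)

theorem exists_mem_closedBall_infDist_eq_add {q : Euc n} (hq : 0 < infDist q S) {ε : ℝ}
    (hε : 0 ≤ ε) (hεr : infDist q S + ε ≤ r) :
    ∃ y ∈ closedBall q ε, infDist y S = infDist q S + ε := by
  set M := supInfDistOnBall S q
  have hM : ∀ t, 0 ≤ t → infDist q S ≤ M t := fun t ht =>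
    infDist_le_supInfDistOnBall (mem_closedBall_self ht)
  have hgrowth : ε - M ε ≤ -infDist q S := by
    refine image_le_of_liminf_slope_right_le_deriv_boundary (f := fun t => t - M t)
      (B := fun _ => -infDist q S) (B' := fun _ => 0) ?_ ?_ continuousOn_const
      (fun _ _ => hasDerivWithinAt_const _ _ _) ?_ ⟨hε, le_rfl⟩
    · exact continuousOn_id.sub
        (lipschitzOnWith_supInfDistOnBall.continuousOn.mono Icc_subset_Ici_self)
    · linarith [hM 0 le_rfl]
    · intro t ht c hc
      have hpos : 0 < M t := hq.trans_le (hM t ht.1)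
      have hlt : M t < r := (supInfDistOnBall_le ht.1).trans_lt (by linarith [ht.2])
      refine Eventually.frequently ?_
      filter_upwards [eventually_supInfDistOnBall_ge hcl hne Hu ht.1 hpos hlt (half_pos hc),
        self_mem_nhdsWithin] with z hz (htz : t < z)
      rw [slope_def_field, div_lt_iff₀ (sub_pos.mpr htz)]
      nlinarith [sub_pos.mpr htz]
  obtain ⟨y, hy, hmax⟩ := exists_infDist_eq_supInfDistOnBall (S := S) (q := q) hε
  refine ⟨y, hy, le_antisymm ?_ (by linarith)⟩
  linarith [infDist_le_infDist_add_dist (x := y) (y := q) (s := S), mem_closedBall.mp hy]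

theorem mem_projSet_add_smul_add {a v : Euc n} (ha : a ∈ S) (hv : ‖v‖ = 1) {μ ε : ℝ}
    (hμ : 0 < μ) (haμ : a ∈ projSet S (a + μ • v)) (hε : 0 ≤ ε) (hεr : μ + ε ≤ r) :
    a ∈ projSet S (a + (μ + ε) • v) := by
  have hq : infDist (a + μ • v) S = μ := by
    rw [← haμ.2, dist_self_add_left, norm_smul, hv, mul_one, Real.norm_of_nonneg hμ.le]
  obtain ⟨y, hy, hyd⟩ := exists_mem_closedBall_infDist_eq_add hcl hne Hu (hq ▸ hμ) hε
    (by rwa [hq])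
  rw [hq] at hyd
  have hfar : μ + ε ≤ ‖(y - (a + μ • v)) + μ • v‖ := by
    rw [show y - (a + μ • v) + μ • v = y - a by abel, ← dist_eq_norm, ← hyd]
    exact infDist_le_dist_of_mem ha
  have hy' := eq_smul_of_norm_le_of_le_norm_add_smul hv hμ
    ((dist_eq_norm _ _).symm.trans_le (mem_closedBall.mp hy)) hfar
  have hya : y = a + (μ + ε) • v := by
    rw [add_smul, ← add_assoc, ← hy', add_sub_cancel]
  refine ⟨ha, ?_⟩
  rw [← hya, hyd, hya, dist_self_add_left, norm_smul, hv, mul_one,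
    Real.norm_of_nonneg (by linarith)]

theorem isProxRegular_of_existsUnique_mem_projSet : IsProxRegular r S := by
  rintro a ha η ⟨σ, hσ, haσ⟩ hη s hs hsr
  have hσs : 0 < min σ s := lt_min hσ hs
  have haσs : a ∈ projSet S (a + min σ s • η) := by
    have := mem_projSet_add_smul ha haσ (div_nonneg hσs.le hσ.le)
      ((div_le_one hσ).mpr (min_le_left _ _))
    rwa [smul_smul, div_mul_cancel₀ _ hσ.ne'] at this
  set K := {t : ℝ | a ∈ projSet S (a + t • η)}
  have hK : IsClosed K := by
    have : K = {t | dist (a + t • η) a = infDist (a + t • η) S} := by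
      ext t; simp [K, projSet, ha]
    rw [this]
    exact isClosed_eq (by fun_prop) ((continuous_infDist_pt S).comp (by fun_prop))
  refine (hK.inter isClosed_Icc).Icc_subset_of_forall_exists_gt haσs ?_
    ⟨min_le_right _ _, le_rfl⟩
  rintro μ ⟨hμK, hσμ, hμs⟩ y (hy : μ < y)
  have hstep : 0 < min (y - μ) (s - μ) := lt_min (sub_pos.mpr hy) (sub_pos.mpr hμs)
  refine ⟨μ + min (y - μ) (s - μ), mem_projSet_add_smul_add hcl hne Hu ha hη
    (hσs.trans_le hσμ) hμK hstep.le ?_, by linarith, ?_⟩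
  · linarith [min_le_right (y - μ) (s - μ)]
  · linarith [min_le_left (y - μ) (s - μ)]

end UniqueProjection

/-- Proposition 2.3 (i)⇔(iii): `S` is `r`-prox-regular iff the metric
projection is single-valued on `U_r = {x : d_S(x) < r}`; moreover, in that case, for
every `s ∈ (0, r)` the projection is `(1 − s/r)⁻¹`-Lipschitz on `U_s`. -/
theorem stmt6 {n : ℕ} (S : Set (Euc n)) (hne : S.Nonempty) (hcl : IsClosed S)
    (r : ℝ) (hr : 0 < r) :
    (IsProxRegular r S ↔ ∀ x : Euc n, Metric.infDist x S < r → ∃! y, y ∈ projSet S x) ∧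
    (IsProxRegular r S →
      ∀ s : ℝ, 0 < s → s < r →
        ∀ x y : Euc n, Metric.infDist x S < s → Metric.infDist y S < s →
          ∀ px ∈ projSet S x, ∀ py ∈ projSet S y,
            dist px py ≤ (1 / (1 - s / r)) * dist x y) := by
  refine ⟨⟨fun hpr x hx => hpr.existsUnique_mem_projSet hr hcl hne hx,
    isProxRegular_of_existsUnique_mem_projSet hcl hne⟩, ?_⟩
  intro hpr s _ hsr x y hx hy px hpx py hpy
  exact hpr.dist_projSet_le_of_infDist_lt hr hsr hx hy hpx hpy
end
end

section
/- Let S ⊆ ℝⁿ be a nonempty closed set and x̄ ∈ S. If S is Quasi Prox-Regular at x̄, then the Clarke tangent cone T^C_S(x̄) is a QDQ approximating cone to S at x̄. -/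
open Metric Set Filter

noncomputable section

/-- The Clarke tangent cone to `S` at `xbar`. -/
def clarkeTangentCone {n : ℕ} (S : Set (Euc n)) (xbar : Euc n) : Set (Euc n) :=
  {v | Filter.limsup
      (fun q : ℝ × Euc n =>
        (Metric.infDist (q.2 + q.1 • v) S - Metric.infDist q.2 S) / q.1)
      ((nhdsWithin (0 : ℝ) (Set.Ioi 0)) ×ˢ (nhds xbar)) = 0}

/-- `S` is Quasi Prox-Regular at `xbar ∈ S`: for some `δ > 0`, either
`(xbar + T^C_S(xbar)) ∩ B_δ(xbar) ⊆ S`, or `S` coincides on `B_δ(xbar)` with an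
`r`-prox-regular set for some `r > 0`. -/
def QuasiProxRegularAt {n : ℕ} (S : Set (Euc n)) (xbar : Euc n) : Prop :=
  ∃ δ > (0 : ℝ),
    ({x | ∃ v ∈ clarkeTangentCone S xbar, x = xbar + v} ∩ Metric.ball xbar δ ⊆ S) ∨
    (∃ r > (0 : ℝ), ∃ S' : Set (Euc n), S'.Nonempty ∧ IsClosed S' ∧ IsProxRegular r S' ∧
      S ∩ Metric.ball xbar δ = S' ∩ Metric.ball xbar δ)

/-- A modulus: nondecreasing on `[0, ∞)`, nonnegative, `ρ(0) = 0 = lim_{s→0⁺} ρ(s)`. -/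
def IsModulus (ρ : ℝ → ℝ) : Prop :=
  (∀ s, 0 ≤ ρ s) ∧ MonotoneOn ρ (Set.Ici 0) ∧ ρ 0 = 0 ∧
    Filter.Tendsto ρ (nhdsWithin (0 : ℝ) (Set.Ioi 0)) (nhds 0)

/-- `Λ` is a Quasi Differential Quotient (QDQ) of the set-valued map `G : ℝᴺ ⇝ ℝⁿ`
at `(ξbar, ybar)` in the direction of `Γ`. -/
def IsQDQ {N n : ℕ} (G : Euc N → Set (Euc n)) (ξbar : Euc N) (ybar : Euc n)
    (Λ : Set (Euc N →L[ℝ] Euc n)) (Γ : Set (Euc N)) : Prop :=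
  IsCompact Λ ∧
  ∃ ρ : ℝ → ℝ, IsModulus ρ ∧ ∃ δbar > (0 : ℝ), ∀ δ : ℝ, 0 < δ → δ ≤ δbar →
    ∃ (L : Euc N → (Euc N →L[ℝ] Euc n)) (h : Euc N → Euc n),
      ContinuousOn (fun ξ => (L ξ, h ξ)) (Metric.ball ξbar δ ∩ Γ) ∧
      ∀ ξ ∈ Metric.ball ξbar δ ∩ Γ,
        ybar + L ξ (ξ - ξbar) + h ξ ∈ G ξ ∧
        (∃ L' ∈ Λ, ‖L ξ - L'‖ ≤ ρ δ) ∧ ‖h ξ‖ ≤ δ * ρ δ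

/-- `𝒦` is a QDQ approximating cone to `S` at `xbar`. -/
def IsQDQApproxCone {n : ℕ} (𝒦 : Set (Euc n)) (S : Set (Euc n)) (xbar : Euc n) : Prop :=
  Convex ℝ 𝒦 ∧
  ∃ (N : ℕ) (G : Euc N → Set (Euc n)) (Γ : Set (Euc N)) (L : Euc N →L[ℝ] Euc n),
    Convex ℝ Γ ∧ (∀ a : ℝ, 0 ≤ a → ∀ ξ ∈ Γ, a • ξ ∈ Γ) ∧
    IsQDQ G 0 xbar {L} Γ ∧ (∀ ξ ∈ Γ, G ξ ⊆ S) ∧ 𝒦 = L '' Γ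


/-! Take `G ≡ S`, `Γ = T^C_S(xbar)` and `L = id`. The Clarke tangent cone is a convex cone, and
its defining limits are uniform on the cone because the unit sphere is compact; hence
`d_S(xbar + ξ) ≤ ‖ξ‖ ρ(‖ξ‖)` on the cone for a modulus `ρ`. In case (i) the correction `h = 0`
works. In case (ii) let `h(ξ)` move `xbar + ξ` to its projection on the prox-regular set `S'`:
hypomonotonicity of proximal normals makes this projection Lipschitz near `S'`, so `h` is
continuous; near `xbar` the projection lies in `S`, and
`|h(ξ)| = d_{S'}(xbar + ξ) ≤ d_S(xbar + ξ) ≤ δ ρ(δ)`. -/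

open Topology

section Modulus

variable {E : Type*} [SeminormedAddCommGroup E]

/-- The extra `0` makes the set nonempty, and `ξ` with `‖ξ‖ = 0` contribute `f ξ / 0 = 0`. -/
def supRatio (K : Set E) (f : E → ℝ) (s : ℝ) : ℝ :=
  sSup (insert 0 ((fun ξ => f ξ / ‖ξ‖) '' {ξ ∈ K | ‖ξ‖ ≤ s}))

variable {K : Set E} {f : E → ℝ} {C : ℝ}

lemma bddAbove_supRatio_set (hC : ∀ ξ ∈ K, f ξ ≤ C * ‖ξ‖) (s : ℝ) :
    BddAbove (insert 0 ((fun ξ => f ξ / ‖ξ‖) '' {ξ ∈ K | ‖ξ‖ ≤ s})) := by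
  refine ⟨max C 0, ?_⟩
  rintro _ (rfl | ⟨ξ, ⟨hξK, -⟩, rfl⟩)
  · exact le_max_right _ _
  rcases (norm_nonneg ξ).eq_or_lt with h0 | hpos
  · simp [← h0]
  · exact (div_le_iff₀ hpos).2 (hC ξ hξK) |>.trans (le_max_left _ _)

lemma supRatio_nonneg (hC : ∀ ξ ∈ K, f ξ ≤ C * ‖ξ‖) (s : ℝ) : 0 ≤ supRatio K f s :=
  le_csSup (bddAbove_supRatio_set hC s) (mem_insert _ _)

lemma monotone_supRatio (hC : ∀ ξ ∈ K, f ξ ≤ C * ‖ξ‖) : Monotone (supRatio K f) := fun _ s' hss' =>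
  csSup_le_csSup (bddAbove_supRatio_set hC s') (insert_nonempty _ _)
    (insert_subset_insert (image_mono fun _ hξ => ⟨hξ.1, hξ.2.trans hss'⟩))

lemma supRatio_le {s ε : ℝ} (hε : 0 ≤ ε) (h : ∀ ξ ∈ K, ‖ξ‖ ≤ s → f ξ ≤ ε * ‖ξ‖) :
    supRatio K f s ≤ ε := by
  refine csSup_le (insert_nonempty _ _) ?_
  rintro _ (rfl | ⟨ξ, ⟨hξK, hξs⟩, rfl⟩)
  · exact hε
  rcases (norm_nonneg ξ).eq_or_lt with h0 | hpos
  · simpa [← h0] using hε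
  · exact (div_le_iff₀ hpos).2 (h ξ hξK hξs)

lemma le_mul_supRatio (hC : ∀ ξ ∈ K, f ξ ≤ C * ‖ξ‖) {ξ : E} (hξ : ξ ∈ K) {s : ℝ}
    (hξs : ‖ξ‖ ≤ s) : f ξ ≤ s * supRatio K f s := by
  have hρ := supRatio_nonneg hC s
  rcases (norm_nonneg ξ).eq_or_lt with h0 | hpos
  · calc f ξ ≤ C * ‖ξ‖ := hC ξ hξ
      _ = 0 := by rw [← h0, mul_zero]
      _ ≤ s * supRatio K f s := mul_nonneg (h0.le.trans hξs) hρ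
  have hratio : f ξ / ‖ξ‖ ≤ supRatio K f s :=
    le_csSup (bddAbove_supRatio_set hC s) (mem_insert_of_mem _ ⟨ξ, ⟨hξ, hξs⟩, rfl⟩)
  calc f ξ ≤ ‖ξ‖ * supRatio K f s := by rwa [div_le_iff₀' hpos] at hratio
    _ ≤ s * supRatio K f s := mul_le_mul_of_nonneg_right hξs hρ

lemma exists_isModulus_le_mul (hC : ∀ ξ ∈ K, f ξ ≤ C * ‖ξ‖)
    (hf : ∀ ε > 0, ∃ s₀ > 0, ∀ ξ ∈ K, ‖ξ‖ ≤ s₀ → f ξ ≤ ε * ‖ξ‖) :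
    ∃ ρ : ℝ → ℝ, IsModulus ρ ∧ ∀ ξ ∈ K, ∀ s, ‖ξ‖ ≤ s → f ξ ≤ s * ρ s := by
  refine ⟨supRatio K f, ⟨supRatio_nonneg hC, (monotone_supRatio hC).monotoneOn _,
    (supRatio_le le_rfl fun ξ hξ hξ0 => ?_).antisymm (supRatio_nonneg hC 0), ?_⟩,
    fun ξ hξ s hξs => le_mul_supRatio hC hξ hξs⟩
  · simpa [(norm_nonneg ξ).antisymm' hξ0] using hC ξ hξ
  rw [Metric.tendsto_nhds]
  intro ε hε
  obtain ⟨s₀, hs₀, hs₀f⟩ := hf (ε / 2) (half_pos hε)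
  filter_upwards [Ioc_mem_nhdsGT hs₀] with s hs
  rw [Real.dist_eq, sub_zero, abs_of_nonneg (supRatio_nonneg hC s)]
  exact (supRatio_le (half_pos hε).le fun ξ hξ hξs => hs₀f ξ hξ (hξs.trans hs.2)).trans_lt
    (half_lt_self hε)

end Modulus

section ClarkeTangentCone

variable {n : ℕ}

def clarkeFilter (xbar : Euc n) : Filter (ℝ × Euc n) :=
  𝓝[>] 0 ×ˢ 𝓝 xbar

def clarkeQuotient (S : Set (Euc n)) (v : Euc n) (q : ℝ × Euc n) : ℝ :=
  (infDist (q.2 + q.1 • v) S - infDist q.2 S) / q.1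

variable {S : Set (Euc n)} {xbar u v : Euc n}

lemma tendsto_clarkeFilter (xbar : Euc n) :
    Tendsto (fun t : ℝ => (t, xbar)) (𝓝[>] 0) (clarkeFilter xbar) :=
  tendsto_id.prodMk tendsto_const_nhds

instance (xbar : Euc n) : (clarkeFilter xbar).NeBot :=
  (tendsto_clarkeFilter xbar).neBot

lemma eventually_fst_pos_clarkeFilter (xbar : Euc n) :
    ∀ᶠ q : ℝ × Euc n in clarkeFilter xbar, 0 < q.1 :=
  Eventually.prod_inl self_mem_nhdsWithin _

lemma abs_clarkeQuotient_le (S : Set (Euc n)) (v : Euc n) {q : ℝ × Euc n} (hq : 0 < q.1) :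
    |clarkeQuotient S v q| ≤ ‖v‖ := by
  rw [clarkeQuotient, abs_div, abs_of_pos hq, div_le_iff₀ hq]
  calc |infDist (q.2 + q.1 • v) S - infDist q.2 S| ≤ dist (q.2 + q.1 • v) q.2 := by
        simpa [Real.dist_eq] using (lipschitz_infDist_pt S).dist_le_mul (q.2 + q.1 • v) q.2
    _ = ‖v‖ * q.1 := by rw [dist_self_add_left, norm_smul, Real.norm_of_nonneg hq.le, mul_comm]

lemma clarkeQuotient_of_mem (hxbar : xbar ∈ S) (t : ℝ) :
    clarkeQuotient S v (t, xbar) = infDist (xbar + t • v) S / t := by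
  rw [clarkeQuotient, infDist_zero_of_mem hxbar, sub_zero]

lemma mem_clarkeTangentCone_iff (hxbar : xbar ∈ S) :
    v ∈ clarkeTangentCone S xbar ↔
      ∀ ε > 0, ∀ᶠ q in clarkeFilter xbar, clarkeQuotient S v q < ε := by
  have hle : IsBoundedUnder (· ≤ ·) (clarkeFilter xbar) (clarkeQuotient S v) :=
    isBoundedUnder_of_eventually_le <| (eventually_fst_pos_clarkeFilter xbar).mono
      fun q hq => (le_abs_self _).trans (abs_clarkeQuotient_le S v hq)
  have hge : IsBoundedUnder (· ≥ ·) (clarkeFilter xbar) (clarkeQuotient S v) :=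
    isBoundedUnder_of_eventually_ge <| (eventually_fst_pos_clarkeFilter xbar).mono
      fun q hq => neg_le_of_abs_le (abs_clarkeQuotient_le S v hq)
  -- the limsup is never negative, because `d_S(xbar) = 0`
  have hnonneg : 0 ≤ limsup (clarkeQuotient S v) (clarkeFilter xbar) := by
    have hbase : ∀ᶠ t in 𝓝[>] (0 : ℝ), 0 ≤ clarkeQuotient S v (t, xbar) := by
      filter_upwards [self_mem_nhdsWithin] with t (ht : 0 < t)
      rw [clarkeQuotient_of_mem hxbar]
      exact div_nonneg infDist_nonneg ht.le
    exact le_limsup_of_frequently_le ((tendsto_clarkeFilter xbar).frequently hbase.frequently) hle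
  change limsup _ _ = 0 ↔ _
  refine ⟨fun h ε hε => eventually_lt_of_limsup_lt (h ▸ hε) hle, fun h => ?_⟩
  exact le_antisymm ((limsup_le_iff hge.isCoboundedUnder_le hle).2 h) hnonneg

lemma zero_mem_clarkeTangentCone (hxbar : xbar ∈ S) : 0 ∈ clarkeTangentCone S xbar :=
  (mem_clarkeTangentCone_iff hxbar).2 fun ε hε =>
    Eventually.of_forall fun q => by simpa [clarkeQuotient] using hε

lemma smul_mem_clarkeTangentCone (hxbar : xbar ∈ S) {a : ℝ} (ha : 0 ≤ a)
    (hv : v ∈ clarkeTangentCone S xbar) : a • v ∈ clarkeTangentCone S xbar := by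
  rcases ha.eq_or_lt with rfl | ha
  · simpa using zero_mem_clarkeTangentCone hxbar
  have hscale : Tendsto (fun q : ℝ × Euc n => (a * q.1, q.2)) (clarkeFilter xbar)
      (clarkeFilter xbar) :=
    ((tendsto_iff_comap.2 (comap_mulLeft_nhdsGT_zero ha).ge).comp tendsto_fst).prodMk
      tendsto_snd
  rw [mem_clarkeTangentCone_iff hxbar] at hv ⊢
  intro ε hε
  filter_upwards [hscale.eventually (hv (ε / a) (div_pos hε ha))] with q hq
  have hq' : clarkeQuotient S (a • v) q = a * clarkeQuotient S v (a * q.1, q.2) := by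
    rcases eq_or_ne q.1 0 with h0 | h0
    · simp [clarkeQuotient, h0]
    · simp only [clarkeQuotient, smul_smul, mul_comm q.1 a]
      field_simp
  rw [hq']
  calc a * clarkeQuotient S v (a * q.1, q.2) < a * (ε / a) := mul_lt_mul_of_pos_left hq ha
    _ = ε := mul_div_cancel₀ ε ha.ne'

lemma add_mem_clarkeTangentCone (hxbar : xbar ∈ S) (hu : u ∈ clarkeTangentCone S xbar)
    (hv : v ∈ clarkeTangentCone S xbar) : u + v ∈ clarkeTangentCone S xbar := by
  have hshift : Tendsto (fun q : ℝ × Euc n => (q.1, q.2 + q.1 • u)) (clarkeFilter xbar)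
      (clarkeFilter xbar) := by
    refine tendsto_fst.prodMk ?_
    have h0 : Tendsto Prod.fst (clarkeFilter xbar) (𝓝 (0 : ℝ)) :=
      tendsto_fst.mono_right nhdsWithin_le_nhds
    simpa using (tendsto_snd (f := 𝓝[>] (0 : ℝ))).add (h0.smul_const u)
  rw [mem_clarkeTangentCone_iff hxbar] at hu hv ⊢
  intro ε hε
  filter_upwards [hu (ε / 2) (half_pos hε), hshift.eventually (hv (ε / 2) (half_pos hε))]
    with q hqu hqv
  have hq : clarkeQuotient S (u + v) q =
      clarkeQuotient S u q + clarkeQuotient S v (q.1, q.2 + q.1 • u) := by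
    simp only [clarkeQuotient, smul_add, ← add_assoc, ← add_div]
    ring_nf
  linarith

lemma convex_clarkeTangentCone (hxbar : xbar ∈ S) : Convex ℝ (clarkeTangentCone S xbar) :=
  fun _ hv _ hw _ _ ha hb _ => add_mem_clarkeTangentCone hxbar
    (smul_mem_clarkeTangentCone hxbar ha hv) (smul_mem_clarkeTangentCone hxbar hb hw)

/-- A finite net of unit tangent vectors controls all the others. -/
lemma exists_forall_infDist_add_le_of_mem_clarkeTangentCone (hxbar : xbar ∈ S) {ε : ℝ}
    (hε : 0 < ε) : ∃ s₀ > 0, ∀ ξ ∈ clarkeTangentCone S xbar, ‖ξ‖ ≤ s₀ →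
      infDist (xbar + ξ) S ≤ ε * ‖ξ‖ := by
  set K := clarkeTangentCone S xbar ∩ sphere (0 : Euc n) 1
  obtain ⟨net, hnetK, hnet_fin, hnet_cov⟩ := finite_approx_of_totallyBounded
    ((isCompact_sphere (0 : Euc n) 1).totallyBounded.subset inter_subset_right) (ε / 2)
    (half_pos hε)
  have hnet : ∀ᶠ t in 𝓝[>] (0 : ℝ), ∀ w ∈ net, infDist (xbar + t • w) S < ε / 2 * t := by
    have hq : ∀ᶠ t in 𝓝[>] (0 : ℝ), ∀ w ∈ net, clarkeQuotient S w (t, xbar) < ε / 2 :=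
      (tendsto_clarkeFilter xbar).eventually <| (eventually_all_finite hnet_fin).2 fun w hw =>
        (mem_clarkeTangentCone_iff hxbar).1 (hnetK hw).1 _ (half_pos hε)
    filter_upwards [hq, self_mem_nhdsWithin] with t hqt (ht : 0 < t) w hw
    simpa only [clarkeQuotient_of_mem hxbar, div_lt_iff₀ ht] using hqt w hw
  obtain ⟨t₀, ht₀, hIoo⟩ := mem_nhdsGT_iff_exists_Ioo_subset.1 hnet
  refine ⟨t₀ / 2, half_pos ht₀, fun ξ hξ hξt₀ => ?_⟩
  rcases (norm_nonneg ξ).eq_or_lt with h0 | hpos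
  · simp [norm_eq_zero.1 h0.symm, infDist_zero_of_mem hxbar]
  have hwK : ‖ξ‖⁻¹ • ξ ∈ K :=
    ⟨smul_mem_clarkeTangentCone hxbar (inv_nonneg.2 hpos.le) hξ, by
      simp [norm_smul, hpos.ne']⟩
  obtain ⟨w, hw, hξw⟩ := mem_iUnion₂.1 (hnet_cov hwK)
  have hξ_near : dist (xbar + ξ) (xbar + ‖ξ‖ • w) ≤ ε / 2 * ‖ξ‖ :=
    calc dist (xbar + ξ) (xbar + ‖ξ‖ • w) = dist (‖ξ‖ • (‖ξ‖⁻¹ • ξ)) (‖ξ‖ • w) := by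
          rw [dist_add_left, smul_inv_smul₀ hpos.ne']
      _ = dist (‖ξ‖⁻¹ • ξ) w * ‖ξ‖ := by
          rw [dist_smul₀, Real.norm_of_nonneg hpos.le, mul_comm]
      _ ≤ ε / 2 * ‖ξ‖ := mul_le_mul_of_nonneg_right (mem_ball.1 hξw).le hpos.le
  calc infDist (xbar + ξ) S ≤ infDist (xbar + ‖ξ‖ • w) S + dist (xbar + ξ) (xbar + ‖ξ‖ • w) :=
        infDist_le_infDist_add_dist
    _ ≤ ε / 2 * ‖ξ‖ + ε / 2 * ‖ξ‖ :=
        add_le_add (hIoo ⟨hpos, by linarith⟩ w hw).le hξ_near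
    _ = ε * ‖ξ‖ := by ring

lemma exists_isModulus_infDist_add_le (hxbar : xbar ∈ S) :
    ∃ ρ : ℝ → ℝ, IsModulus ρ ∧ ∀ ξ ∈ clarkeTangentCone S xbar, ∀ s, ‖ξ‖ ≤ s →
      infDist (xbar + ξ) S ≤ s * ρ s :=
  exists_isModulus_le_mul (C := 1)
    (fun ξ _ => by simpa using infDist_le_dist_of_mem (x := xbar + ξ) hxbar)
    fun _ hε => exists_forall_infDist_add_le_of_mem_clarkeTangentCone hxbar hε

end ClarkeTangentCone

namespace IsProxRegular

variable {n : ℕ} {r : ℝ} {S : Set (Euc n)}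

lemma two_mul_inner_le_of_mem_proxNormalCone (hS : IsProxRegular r S) (hr : 0 < r)
    {p η y : Euc n} (hp : p ∈ S) (hη : η ∈ proxNormalCone S p) (hη1 : ‖η‖ = 1) (hy : y ∈ S) :
    2 * r * inner ℝ η (y - p) ≤ ‖y - p‖ ^ 2 := by
  have hproj := hS p hp η hη hη1 r hr le_rfl
  have hr_le : r ≤ ‖r • η - (y - p)‖ :=
    calc r = dist (p + r • η) p := by
          rw [dist_self_add_left, norm_smul, hη1, mul_one, Real.norm_of_nonneg hr.le]
      _ = infDist (p + r • η) S := hproj.2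
      _ ≤ dist (p + r • η) y := infDist_le_dist_of_mem hy
      _ = ‖r • η - (y - p)‖ := by rw [dist_eq_norm]; congr 1; abel
  have hsq := pow_le_pow_left₀ hr.le hr_le 2
  rw [norm_sub_sq_real, norm_smul, Real.norm_of_nonneg hr.le, hη1, real_inner_smul_left] at hsq
  linarith

lemma two_mul_inner_le (hS : IsProxRegular r S) (hr : 0 < r) {z p y : Euc n}
    (hp : p ∈ projSet S z) (hy : y ∈ S) :
    2 * r * inner ℝ (z - p) (y - p) ≤ dist z p * ‖y - p‖ ^ 2 := by
  rcases eq_or_ne z p with rfl | hzp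
  · simp
  have hd : 0 < dist z p := dist_pos.2 hzp
  set η := (dist z p)⁻¹ • (z - p)
  have hzη : z - p = dist z p • η := (smul_inv_smul₀ hd.ne' _).symm
  have hη1 : ‖η‖ = 1 := by
    rw [norm_smul, Real.norm_of_nonneg (inv_nonneg.2 hd.le), ← dist_eq_norm, inv_mul_cancel₀ hd.ne']
  have hη : η ∈ proxNormalCone S p := ⟨dist z p, hd, by rwa [← hzη, add_sub_cancel]⟩
  rw [hzη, real_inner_smul_left, mul_left_comm]
  exact mul_le_mul_of_nonneg_left
    (hS.two_mul_inner_le_of_mem_proxNormalCone hr hp.1 hη hη1 hy) hd.le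

/-- Add the hypomonotonicity inequalities at `p₁` and `p₂`. -/
lemma norm_sub_le_two_mul (hS : IsProxRegular r S) (hr : 0 < r) {z₁ z₂ p₁ p₂ : Euc n}
    (h₁ : p₁ ∈ projSet S z₁) (h₂ : p₂ ∈ projSet S z₂) (hd : dist z₁ p₁ + dist z₂ p₂ ≤ r) :
    ‖p₁ - p₂‖ ≤ 2 * ‖z₁ - z₂‖ := by
  have hA := hS.two_mul_inner_le hr h₁ h₂.1
  have hB := hS.two_mul_inner_le hr h₂ h₁.1
  have hsum : inner ℝ (z₁ - p₁) (p₂ - p₁) + inner ℝ (z₂ - p₂) (p₁ - p₂) =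
      inner ℝ (z₁ - z₂) (p₂ - p₁) + ‖p₁ - p₂‖ ^ 2 := by
    rw [norm_sub_rev, ← real_inner_self_eq_norm_sq, ← neg_sub p₂ p₁, inner_neg_right,
      ← sub_eq_add_neg, ← inner_sub_left, ← inner_add_left]
    congr 1
    abel
  have hCS : -(‖z₁ - z₂‖ * ‖p₁ - p₂‖) ≤ inner ℝ (z₁ - z₂) (p₂ - p₁) := by
    rw [norm_sub_rev p₁]
    exact neg_le_of_abs_le (abs_real_inner_le_norm _ _)
  rw [norm_sub_rev p₂ p₁] at hA
  by_contra! hlt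
  have hc : 0 < ‖p₁ - p₂‖ := (mul_nonneg zero_le_two (norm_nonneg _)).trans_lt hlt
  nlinarith [mul_pos (mul_pos hr hc) (sub_pos.2 hlt),
    mul_nonneg (sub_nonneg.2 hd) (sq_nonneg ‖p₁ - p₂‖)]

lemma lipschitzOnWith_of_mem_projSet (hS : IsProxRegular r S) (hr : 0 < r)
    {P : Euc n → Euc n} (hP : ∀ z, P z ∈ projSet S z) :
    LipschitzOnWith 2 P {z | infDist z S ≤ r / 2} :=
  LipschitzOnWith.of_dist_le_mul fun z₁ hz₁ z₂ hz₂ => by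
    rw [dist_eq_norm, dist_eq_norm, NNReal.coe_ofNat]
    refine hS.norm_sub_le_two_mul hr (hP z₁) (hP z₂) ?_
    rw [(hP z₁).2, (hP z₂).2]
    exact (add_le_add hz₁ hz₂).trans_eq (add_halves r)

end IsProxRegular

section LocalComparison

variable {X : Type*} [PseudoMetricSpace X] {s t : Set X} {x z : X} {δ : ℝ}

lemma mem_of_inter_ball_eq (heq : s ∩ ball x δ = t ∩ ball x δ) {p : X} (hp : p ∈ t)
    (hpz : dist z p ≤ dist z x) (hz : 2 * dist z x < δ) : p ∈ s := by
  have hpx : dist p x < δ := by linarith [dist_triangle p z x, dist_comm p z]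
  exact (heq ▸ ⟨hp, hpx⟩ : p ∈ s ∩ ball x δ).1

lemma infDist_le_infDist_of_inter_ball_eq (heq : s ∩ ball x δ = t ∩ ball x δ) (hx : x ∈ s)
    (hz : 2 * dist z x < δ) : infDist z t ≤ infDist z s := by
  have hxt : x ∈ t := mem_of_inter_ball_eq heq.symm hx le_rfl hz
  refine (le_infDist ⟨x, hx⟩).2 fun y hy => ?_
  by_cases hyx : y ∈ ball x δ
  · have : y ∈ t ∩ ball x δ := heq ▸ ⟨hy, hyx⟩
    exact infDist_le_dist_of_mem this.1
  · have hδy : δ ≤ dist y x := not_lt.1 hyx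
    calc infDist z t ≤ dist z x := infDist_le_dist_of_mem hxt
      _ ≤ dist z y := by linarith [dist_triangle y z x, dist_comm y z]

end LocalComparison

section QDQ

variable {n : ℕ} {S : Set (Euc n)} {xbar : Euc n} {δ₀ : ℝ}

lemma isModulus_zero : IsModulus fun _ => 0 :=
  ⟨fun _ => le_rfl, monotoneOn_const, rfl, tendsto_const_nhds⟩

lemma isQDQ_of_add_clarkeTangentCone_subset (hδ₀ : 0 < δ₀)
    (hsub : {x | ∃ v ∈ clarkeTangentCone S xbar, x = xbar + v} ∩ ball xbar δ₀ ⊆ S) :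
    IsQDQ (fun _ => S) 0 xbar {ContinuousLinearMap.id ℝ (Euc n)} (clarkeTangentCone S xbar) := by
  refine ⟨isCompact_singleton, _, isModulus_zero, δ₀, hδ₀, fun δ _ hδ => ⟨fun _ => .id ℝ _,
    fun _ => 0, continuousOn_const, fun ξ ⟨hξδ, hξ⟩ => ⟨?_, ⟨_, rfl, by simp⟩, by simp⟩⟩⟩
  have hball : xbar + ξ ∈ ball xbar δ₀ := by
    rw [mem_ball, dist_self_add_left]
    exact (mem_ball_zero_iff.1 hξδ).trans_le hδ
  simpa using hsub ⟨⟨ξ, hξ, rfl⟩, hball⟩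

lemma isQDQ_of_inter_ball_eq_of_isProxRegular (hxbar : xbar ∈ S) (hδ₀ : 0 < δ₀) {r : ℝ}
    (hr : 0 < r) {S' : Set (Euc n)} (hS'ne : S'.Nonempty) (hS'cl : IsClosed S')
    (hS' : IsProxRegular r S') (heq : S ∩ ball xbar δ₀ = S' ∩ ball xbar δ₀) :
    IsQDQ (fun _ => S) 0 xbar {ContinuousLinearMap.id ℝ (Euc n)} (clarkeTangentCone S xbar) := by
  obtain ⟨ρ, hρ, hρS⟩ := exists_isModulus_infDist_add_le hxbar
  choose P hP using fun z => hS'cl.exists_infDist_eq_dist hS'ne z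
  have hPproj : ∀ z, P z ∈ projSet S' z := fun z => ⟨(hP z).1, (hP z).2.symm⟩
  have hxbar' : xbar ∈ S' :=
    mem_of_inter_ball_eq (z := xbar) heq.symm hxbar le_rfl (by simpa using hδ₀)
  refine ⟨isCompact_singleton, ρ, hρ, min (δ₀ / 2) (r / 2), by positivity, fun δ hδ hδle => ?_⟩
  have hnear : ∀ ξ ∈ ball (0 : Euc n) δ, dist (xbar + ξ) xbar < δ := fun ξ hξ => by
    rwa [dist_self_add_left, ← mem_ball_zero_iff]
  have hδδ₀ : 2 * δ ≤ δ₀ := by linarith [min_le_left (δ₀ / 2) (r / 2)]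
  have hδr : δ ≤ r / 2 := hδle.trans (min_le_right _ _)
  have hPdist : ∀ z, dist z (P z) ≤ dist z xbar := fun z =>
    (hPproj z).2 ▸ infDist_le_dist_of_mem hxbar'
  refine ⟨fun _ => .id ℝ _, fun ξ => P (xbar + ξ) - (xbar + ξ),
    continuousOn_const.prodMk ?_, fun ξ ⟨hξδ, hξ⟩ => ⟨?_, ⟨_, rfl, by simpa using hρ.1 δ⟩, ?_⟩⟩
  · refine ContinuousOn.sub ?_ (continuousOn_const.add continuousOn_id)
    refine (hS'.lipschitzOnWith_of_mem_projSet hr hPproj).continuousOn.comp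
      (continuous_const.add continuous_id).continuousOn fun ξ hξ => ?_
    exact (infDist_le_dist_of_mem hxbar').trans ((hnear ξ hξ.1).le.trans hδr)
  · have hPS : P (xbar + ξ) ∈ S :=
      mem_of_inter_ball_eq heq (hP _).1 (hPdist _) (by linarith [hnear ξ hξδ])
    simpa using hPS
  · have hξs : ‖ξ‖ ≤ δ := (mem_ball_zero_iff.1 hξδ).le
    calc ‖P (xbar + ξ) - (xbar + ξ)‖ = infDist (xbar + ξ) S' := by
          rw [← dist_eq_norm', (hPproj _).2]
      _ ≤ infDist (xbar + ξ) S :=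
          infDist_le_infDist_of_inter_ball_eq heq hxbar (by linarith [hnear ξ hξδ])
      _ ≤ δ * ρ δ := hρS ξ hξ δ hξs

end QDQ

theorem stmt9_general {n : ℕ} (S : Set (Euc n))
    (xbar : Euc n) (hxbar : xbar ∈ S) (hqpr : QuasiProxRegularAt S xbar) :
    IsQDQApproxCone (clarkeTangentCone S xbar) S xbar := by
  have hQDQ : IsQDQ (fun _ => S) 0 xbar {ContinuousLinearMap.id ℝ (Euc n)}
      (clarkeTangentCone S xbar) := by
    obtain ⟨δ₀, hδ₀, hsub | ⟨r, hr, S', hS'ne, hS'cl, hS', heq⟩⟩ := hqpr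
    · exact isQDQ_of_add_clarkeTangentCone_subset hδ₀ hsub
    · exact isQDQ_of_inter_ball_eq_of_isProxRegular hxbar hδ₀ hr hS'ne hS'cl hS' heq
  exact ⟨convex_clarkeTangentCone hxbar, n, fun _ => S, _, .id ℝ _, convex_clarkeTangentCone hxbar,
    fun _ ha _ hξ => smul_mem_clarkeTangentCone hxbar ha hξ, hQDQ, fun _ _ => subset_rfl,
    (image_id _).symm⟩

/-- Theorem 3.1: if a nonempty closed `S ⊆ ℝⁿ` is Quasi Prox-Regular
at `xbar ∈ S`, then the Clarke tangent cone `T^C_S(xbar)` is a QDQ approximating cone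
to `S` at `xbar`. -/
theorem stmt9 {n : ℕ} (S : Set (Euc n)) (hne : S.Nonempty) (hcl : IsClosed S)
    (xbar : Euc n) (hxbar : xbar ∈ S) (hqpr : QuasiProxRegularAt S xbar) :
    IsQDQApproxCone (clarkeTangentCone S xbar) S xbar :=
  stmt9_general S xbar hxbar hqpr
end
end

section
/- Let z̄ = (S̄, w̄⁰, w̄, ȳ⁰, ȳ, β̄) be a local strict-sense minimizer at which there is a local infimum gap. Then there exists a sequence (ẑ_n)_n of isolated feasible extended processes ẑ_n = (Ŝ_n, ŵ_n⁰, ŵ_n, ŷ_n⁰, ŷ_n, β̂_n) such that d(ẑ_n, z̄) → 0 as n → ∞; in particular (ŷ_n⁰(Ŝ_n), ŷ_n(Ŝ_n)) → (ȳ⁰(S̄), ȳ(S̄)). -/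
open Metric Set Filter MeasureTheory
open scoped RealInnerProductSpace

noncomputable section

abbrev CVec (m₁ m₂ : ℕ) := EuclideanSpace ℝ (Fin m₁ ⊕ Fin m₂)

/-- The data and standing hypotheses of the unbounded/impulsive optimal control problem:
`C¹` bounded vector fields `f, g₁, …, g_m` (`m = m₁ + m₂`, indexed by `Fin m₁ ⊕ Fin m₂`),
a `C¹` cost `Ψ`, a closed control cone `𝒞 = 𝒞₁ × 𝒞₂` where `𝒞₁` contains the coordinate
lines and `𝒞₂` contains no line, a closed target `𝔗 ⊆ [0,∞) × ℝⁿ`, an initial state and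
an energy bound `K ∈ (0, +∞]`. -/
structure Setup (n m₁ m₂ : ℕ) where
  f : Euc n → Euc n
  g : (Fin m₁ ⊕ Fin m₂) → Euc n → Euc n
  Ψ : ℝ × Euc n → ℝ
  C1 : Set (Euc m₁)
  C2 : Set (Euc m₂)
  C : Set (CVec m₁ m₂)
  T : Set (ℝ × Euc n)
  x0 : Euc n
  K : EReal
  hm : 1 ≤ m₁ + m₂
  hf : ContDiff ℝ 1 f
  hf_bdd : ∃ M : ℝ, ∀ x, ‖f x‖ ≤ M ∧ ‖fderiv ℝ f x‖ ≤ M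
  hg : ∀ i, ContDiff ℝ 1 (g i)
  hg_bdd : ∀ i, ∃ M : ℝ, ∀ x, ‖g i x‖ ≤ M ∧ ‖fderiv ℝ (g i) x‖ ≤ M
  hΨ : ContDiff ℝ 1 Ψ
  hC1_closed : IsClosed C1
  hC1_cone : ∀ a : ℝ, 0 ≤ a → ∀ w ∈ C1, a • w ∈ C1
  hC1_lines : ∀ (i : Fin m₁) (t : ℝ), t • (EuclideanSpace.single i (1 : ℝ)) ∈ C1
  hC2_closed : IsClosed C2
  hC2_cone : ∀ a : ℝ, 0 ≤ a → ∀ w ∈ C2, a • w ∈ C2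
  hC2_noline : ∀ v : Euc m₂, v ≠ 0 → ¬ (∀ t : ℝ, t • v ∈ C2)
  hC_eq : C = {w : CVec m₁ m₂ |
      WithLp.toLp 2 (fun i : Fin m₁ => w (Sum.inl i)) ∈ C1 ∧ WithLp.toLp 2 (fun i : Fin m₂ => w (Sum.inr i)) ∈ C2}
  hT_closed : IsClosed T
  hT_sub : T ⊆ Set.Ici (0 : ℝ) ×ˢ Set.univ
  hK : 0 < K

variable {n m₁ m₂ : ℕ}

/-- An extended process `(S, w⁰, w, y⁰, y, β)`: `S > 0`, the controls `(w⁰, w)` are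
measurable with `w⁰ ≥ 0`, `w ∈ 𝒞` and `w⁰ + |w| = 1` a.e. on `[0,S]`, while `(y⁰, y, β)`
is the (absolutely continuous) solution, in integral form, of
`dy⁰/ds = w⁰`, `dy/ds = f(y)w⁰ + Σᵢ gᵢ(y)wⁱ`, `dβ/ds = |w|`, with
`(y⁰, y, β)(0) = (0, x̌, 0)`. -/
structure ExtProcess (P : Setup n m₁ m₂) where
  S : ℝ
  w0 : ℝ → ℝ
  w : ℝ → CVec m₁ m₂
  y0 : ℝ → ℝ
  y : ℝ → Euc n
  β : ℝ → ℝ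
  hS : 0 < S
  hw0_meas : AEStronglyMeasurable w0 (volume.restrict (Set.Icc 0 S))
  hw_meas : AEStronglyMeasurable w (volume.restrict (Set.Icc 0 S))
  hw0_nonneg : ∀ᵐ s ∂(volume.restrict (Set.Icc 0 S)), 0 ≤ w0 s
  hw_mem : ∀ᵐ s ∂(volume.restrict (Set.Icc 0 S)), w s ∈ P.C
  hw_norm : ∀ᵐ s ∂(volume.restrict (Set.Icc 0 S)), w0 s + ‖w s‖ = 1
  hy_cont : ContinuousOn y (Set.Icc 0 S)
  hy0 : ∀ s ∈ Set.Icc 0 S, y0 s = ∫ t in (0 : ℝ)..s, w0 t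
  hy : ∀ s ∈ Set.Icc 0 S, y s = P.x0 +
    ∫ t in (0 : ℝ)..s, (w0 t • P.f (y t) + ∑ i : Fin m₁ ⊕ Fin m₂, w t i • P.g i (y t))
  hβ : ∀ s ∈ Set.Icc 0 S, β s = ∫ t in (0 : ℝ)..s, ‖w t‖

variable {P : Setup n m₁ m₂}

/-- The control distance `d(z₁, z₂) := |S₁ − S₂| + ‖(w₂⁰, w₂) − (w₁⁰, w₁)‖_{L¹([0, S₁∧S₂])}`. -/
def dproc (z₁ z₂ : ExtProcess P) : ℝ :=
  |z₁.S - z₂.S| +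
    ∫ s in Set.Icc 0 (min z₁.S z₂.S), (|z₁.w0 s - z₂.w0 s| + ‖z₁.w s - z₂.w s‖)

/-- The (time, state, energy) endpoint of an extended process. -/
def endpt (z : ExtProcess P) : ℝ × Euc n × ℝ := (z.y0 z.S, z.y z.S, z.β z.S)

/-- A feasible extended process: `(y⁰(S), y(S)) ∈ 𝔗` and `β(S) ≤ K`. -/
def Feasible (z : ExtProcess P) : Prop :=
  (z.y0 z.S, z.y z.S) ∈ P.T ∧ (z.β z.S : EReal) ≤ P.K

/-- An embedded strict-sense process: `w⁰ > 0` a.e. -/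
def StrictSense (z : ExtProcess P) : Prop :=
  ∀ᵐ s ∂(volume.restrict (Set.Icc 0 z.S)), 0 < z.w0 s

/-- The strict-sense reachable set of radius `r` around `ẑ`: endpoints `(y⁰, y, β)(S)` of
embedded strict-sense processes `z` with `d(z, ẑ) < r`. -/
def Reach (zh : ExtProcess P) (r : ℝ) : Set (ℝ × Euc n × ℝ) :=
  {e | ∃ z : ExtProcess P, StrictSense z ∧ dproc z zh < r ∧ e = endpt z}

/-- `R^r_{W₊}(ẑ) ∩ (𝔗 × [0,K])`: the feasible part of the strict-sense reachable set. -/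
def FeasReach (zh : ExtProcess P) (r : ℝ) : Set (ℝ × Euc n × ℝ) :=
  {e ∈ Reach zh r | (e.1, e.2.1) ∈ P.T ∧ (e.2.2 : EReal) ≤ P.K}

/-- There is a local infimum gap at the feasible extended process `ẑ`:
`Ψ(ŷ⁰(Ŝ), ŷ(Ŝ)) < inf { Ψ(y⁰, y) : (y⁰,y,β) ∈ R^r_{W₊}(ẑ) ∩ (𝔗×[0,K]) }` for some `r > 0`. -/
def HasLocalGap (zh : ExtProcess P) : Prop :=
  ∃ r > (0 : ℝ),
    ((P.Ψ (zh.y0 zh.S, zh.y zh.S) : ℝ) : EReal) <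
      ⨅ e ∈ FeasReach zh r, ((P.Ψ (e.1, e.2.1) : ℝ) : EReal)

/-- `ẑ` is isolated: no feasible embedded strict-sense process in some `d`-neighborhood. -/
def Isolated (zh : ExtProcess P) : Prop :=
  ∃ r > (0 : ℝ), FeasReach zh r = ∅
/-- `z̄` is a local strict-sense minimizer: a feasible embedded strict-sense process whose
cost is minimal among feasible endpoints of nearby embedded strict-sense processes. -/
def IsLocalStrictSenseMinimizer (zb : ExtProcess P) : Prop :=
  Feasible zb ∧ StrictSense zb ∧
    ∃ r > (0 : ℝ), ∀ e ∈ FeasReach zb r, P.Ψ (zb.y0 zb.S, zb.y zb.S) ≤ P.Ψ (e.1, e.2.1)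

/-- There is a local infimum gap at the local strict-sense minimizer `z̄`: for every
`ε > 0` there is a feasible extended process `z` with `d(z, z̄) < ε` and strictly
smaller cost. -/
def HasStrictSenseGap (zb : ExtProcess P) : Prop :=
  ∀ ε > (0 : ℝ), ∃ z : ExtProcess P, Feasible z ∧ dproc z zb < ε ∧
    P.Ψ (z.y0 z.S, z.y z.S) < P.Ψ (zb.y0 zb.S, zb.y zb.S)

/-!
Pick, from the gap, feasible extended processes `z` with `d(z, z̄) → 0` and `Ψ(z) < Ψ(z̄)`;
each of them is isolated. Indeed, by Grönwall's inequality the endpoint `(y⁰(S), y(S))` is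
Lipschitz in `d` at `z`, so by continuity of `Ψ` every strict-sense process `d`-close to `z`
costs less than `z̄`. On the other hand `d` satisfies the quasi-triangle inequality
`d(z', z̄) ≤ d(z', z) + 5 d(z, z̄)`, so such a process also lies in the neighbourhood where
`z̄` is minimal among feasible strict-sense processes: it cannot be feasible.
-/

theorem MeasureTheory.IntegrableOn.intervalIntegrable_of_mem_Icc {E : Type*}
    [NormedAddCommGroup E] {f : ℝ → E} {S s : ℝ} (hf : IntegrableOn f (Icc 0 S))
    (hs : s ∈ Icc 0 S) : IntervalIntegrable f volume 0 s :=
  (hf.mono_set (uIcc_of_le hs.1 ▸ Icc_subset_Icc_right hs.2)).intervalIntegrable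

theorem le_mul_exp_of_le_add_mul_integral {u : ℝ → ℝ} {a K T : ℝ} (hK : 0 ≤ K) (hT : 0 ≤ T)
    (hu : ContinuousOn u (Icc 0 T)) (h : ∀ s ∈ Icc 0 T, u s ≤ a + K * ∫ t in 0..s, u t) :
    u T ≤ a * Real.exp (K * T) := by
  -- extend `u` continuously to `ℝ`, so that its primitive is differentiable everywhere
  set v : ℝ → ℝ := fun t => u (projIcc 0 T hT t)
  have hv : Continuous v :=
    hu.comp_continuous (continuous_subtype_val.comp continuous_projIcc) fun t =>
      (projIcc 0 T hT t).2
  have hvu : ∀ s ∈ Icc 0 T, v s = u s := fun s hs => by simp [v, projIcc_of_mem hT hs]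
  have hint : ∀ s ∈ Icc 0 T, ∫ t in 0..s, v t = ∫ t in 0..s, u t := fun s hs =>
    intervalIntegral.integral_congr fun t ht => by
      rw [uIcc_of_le hs.1] at ht
      exact hvu t ⟨ht.1, ht.2.trans hs.2⟩
  set G : ℝ → ℝ := fun s => ∫ t in 0..s, v t
  have hG : ∀ x, HasDerivAt G (v x) x := fun x => (hv.integral_hasStrictDerivAt 0 x).hasDerivAt
  have hGT := le_gronwallBound_of_liminf_deriv_right_le (f := G) (f' := v) (δ := 0) (K := K)
    (ε := a) (continuous_iff_continuousAt.2 fun x => (hG x).continuousAt).continuousOn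
    (fun x _ r hr => by
      simpa [slope_def_module] using (hG x).hasDerivWithinAt.liminf_right_slope_le hr)
    (by simp [G]) (fun x hx => by
      show v x ≤ K * (∫ t in 0..x, v t) + a
      rw [hvu x (Ico_subset_Icc_self hx), hint x (Ico_subset_Icc_self hx)]
      linarith [h x (Ico_subset_Icc_self hx)]) T ⟨hT, le_rfl⟩
  have hKG : K * G T ≤ a * (Real.exp (K * T) - 1) := by
    rcases hK.eq_or_lt with rfl | hK
    · simp
    · rw [sub_zero, gronwallBound_of_K_ne_0 hK.ne'] at hGT
      calc K * G T ≤ K * (0 * Real.exp (K * T) + a / K * (Real.exp (K * T) - 1)) :=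
            mul_le_mul_of_nonneg_left hGT hK.le
        _ = a * (Real.exp (K * T) - 1) := by field_simp; ring
  have := h T ⟨hT, le_rfl⟩
  rw [← hint T ⟨hT, le_rfl⟩] at this
  linarith

section IntegralCurve

variable {E : Type*} [NormedAddCommGroup E] [NormedSpace ℝ E] {F : ℝ → E} {x : ℝ → E} {x₀ : E}
  {S B : ℝ}

theorem norm_sub_le_mul_of_eq_integral (hx : ∀ s ∈ Icc 0 S, x s = x₀ + ∫ t in 0..s, F t)
    (hF : IntegrableOn F (Icc 0 S)) (hB : ∀ᵐ t ∂volume.restrict (Icc 0 S), ‖F t‖ ≤ B)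
    {T : ℝ} (hT : T ∈ Icc 0 S) : ‖x S - x T‖ ≤ B * (S - T) := by
  have hS : S ∈ Icc 0 S := ⟨hT.1.trans hT.2, le_rfl⟩
  rw [hx S hS, hx T hT, add_sub_add_left_eq_sub,
    intervalIntegral.integral_interval_sub_left (hF.intervalIntegrable_of_mem_Icc hS)
      (hF.intervalIntegrable_of_mem_Icc hT), ← abs_of_nonneg (sub_nonneg.2 hT.2)]
  refine intervalIntegral.norm_integral_le_of_norm_le_const_ae ?_
  filter_upwards [(ae_restrict_iff' measurableSet_Icc).1 hB] with t ht htT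
  rw [uIoc_of_le hT.2] at htT
  exact ht ⟨hT.1.trans htT.1.le, htT.2⟩

theorem norm_sub_le_of_eq_integral {F' x' : ℝ → E} {S' : ℝ} (hS : 0 ≤ S) (hS' : 0 ≤ S')
    (hx : ∀ s ∈ Icc 0 S, x s = x₀ + ∫ t in 0..s, F t)
    (hx' : ∀ s ∈ Icc 0 S', x' s = x₀ + ∫ t in 0..s, F' t)
    (hF : IntegrableOn F (Icc 0 S)) (hF' : IntegrableOn F' (Icc 0 S'))
    (hB : ∀ᵐ t ∂volume.restrict (Icc 0 S), ‖F t‖ ≤ B)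
    (hB' : ∀ᵐ t ∂volume.restrict (Icc 0 S'), ‖F' t‖ ≤ B) :
    ‖x' S' - x S‖ ≤ ‖x' (min S' S) - x (min S' S)‖ + B * |S' - S| := by
  set T := min S' S
  have hT : 0 ≤ T := le_min hS' hS
  have h := norm_sub_le_mul_of_eq_integral hx hF hB ⟨hT, min_le_right _ _⟩
  have h' := norm_sub_le_mul_of_eq_integral hx' hF' hB' ⟨hT, min_le_left _ _⟩
  have hTS : (S' - T) + (S - T) = |S' - S| := by
    rcases le_total S' S with hle | hle
    · simp only [T, min_eq_left hle, abs_of_nonpos (sub_nonpos.2 hle)]; ring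
    · simp only [T, min_eq_right hle, abs_of_nonneg (sub_nonneg.2 hle)]; ring
  calc ‖x' S' - x S‖ ≤ ‖x' S' - x' T‖ + ‖x' T - x T‖ + ‖x S - x T‖ := by
        rw [norm_sub_rev (x S)]
        linarith [norm_sub_le_norm_sub_add_norm_sub (x' S') (x' T) (x S),
          norm_sub_le_norm_sub_add_norm_sub (x' T) (x T) (x S)]
    _ ≤ B * (S' - T) + ‖x' T - x T‖ + B * (S - T) := by linarith
    _ = ‖x' T - x T‖ + B * |S' - S| := by rw [← hTS]; ring

end IntegralCurve

theorem setIntegral_Icc_le_add_mul {f : ℝ → ℝ} {l a b c : ℝ} (hla : l ≤ a) (hab : a ≤ b)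
    (hf : IntegrableOn f (Icc l b)) (hc : ∀ᵐ t ∂volume.restrict (Icc l b), f t ≤ c) :
    ∫ t in Icc l b, f t ≤ (∫ t in Icc l a, f t) + c * (b - a) := by
  have hsplit : Icc l b = Icc l a ∪ Ioc a b := (Icc_union_Ioc_eq_Icc hla hab).symm
  have hIoc : Ioc a b ⊆ Icc l b := hsplit ▸ subset_union_right
  rw [hsplit, setIntegral_union (Set.disjoint_left.2 fun t ht ht' => ht'.1.not_ge ht.2)
    measurableSet_Ioc (hf.mono_set (hsplit ▸ subset_union_left)) (hf.mono_set hIoc)]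
  gcongr
  calc ∫ t in Ioc a b, f t ≤ ∫ _ in Ioc a b, c :=
        setIntegral_mono_ae_restrict (hf.mono_set hIoc)
          (integrableOn_const measure_Ioc_lt_top.ne) (ae_restrict_of_ae_restrict_of_subset hIoc hc)
    _ = c * (b - a) := by
        rw [setIntegral_const, measureReal_def, Real.volume_Ioc,
          ENNReal.toReal_ofReal (sub_nonneg.2 hab), smul_eq_mul, mul_comm]

theorem norm_smul_sub_smul_le {E : Type*} [SeminormedAddCommGroup E] [NormedSpace ℝ E]
    (a a' : ℝ) (u u' : E) : ‖a' • u' - a • u‖ ≤ |a' - a| * ‖u'‖ + |a| * ‖u' - u‖ := by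
  calc ‖a' • u' - a • u‖ = ‖(a' - a) • u' + a • (u' - u)‖ := by
        rw [sub_smul, smul_sub]; abel_nf
    _ ≤ _ := by
        refine (norm_add_le _ _).trans ?_
        rw [norm_smul, norm_smul, Real.norm_eq_abs, Real.norm_eq_abs]

theorem norm_sub_le_of_norm_fderiv_le {E F : Type*} [NormedAddCommGroup E] [NormedSpace ℝ E]
    [NormedAddCommGroup F] [NormedSpace ℝ F] {h : E → F} (hh : ContDiff ℝ 1 h) {M : ℝ}
    (hM : ∀ x, ‖fderiv ℝ h x‖ ≤ M) (x y : E) : ‖h x - h y‖ ≤ M * ‖x - y‖ :=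
  convex_univ.norm_image_sub_le_of_norm_fderiv_le
    (fun _ _ => (hh.differentiable one_ne_zero).differentiableAt) (fun z _ => hM z)
    (mem_univ y) (mem_univ x)

namespace Setup

def field (P : Setup n m₁ m₂) (w0 : ℝ) (w : CVec m₁ m₂) (x : Euc n) : Euc n :=
  w0 • P.f x + ∑ i, w i • P.g i x

theorem continuous_field (P : Setup n m₁ m₂) :
    Continuous fun p : ℝ × CVec m₁ m₂ × Euc n => P.field p.1 p.2.1 p.2.2 := by
  have hf := P.hf.continuous
  have hg := fun i => (P.hg i).continuous
  unfold field
  fun_prop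

theorem field_zero (P : Setup n m₁ m₂) (x : Euc n) : P.field 0 0 x = 0 := by
  simp [field]

theorem exists_uniform_bound (P : Setup n m₁ m₂) : ∃ M, 0 ≤ M ∧
    (∀ x, ‖P.f x‖ ≤ M ∧ ‖fderiv ℝ P.f x‖ ≤ M) ∧
    ∀ i x, ‖P.g i x‖ ≤ M ∧ ‖fderiv ℝ (P.g i) x‖ ≤ M := by
  obtain ⟨Mf, hMf⟩ := P.hf_bdd
  choose Mg hMg using P.hg_bdd
  obtain ⟨B, hB⟩ := Finite.bddAbove_range Mg
  have hf : Mf ≤ max (max Mf B) 0 := (le_max_left _ _).trans (le_max_left _ _)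
  have hg : ∀ i, Mg i ≤ max (max Mf B) 0 := fun i =>
    (hB (mem_range_self i)).trans ((le_max_right _ _).trans (le_max_left _ _))
  exact ⟨_, le_max_right _ _, fun x => ⟨(hMf x).1.trans hf, (hMf x).2.trans hf⟩,
    fun i x => ⟨(hMg i x).1.trans (hg i), (hMg i x).2.trans (hg i)⟩⟩

theorem exists_norm_field_sub_le (P : Setup n m₁ m₂) :
    ∃ L, 0 ≤ L ∧ ∀ (w0 w0' : ℝ) (w w' : CVec m₁ m₂) (x x' : Euc n), |w0| ≤ 1 → ‖w‖ ≤ 1 →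
      ‖P.field w0' w' x' - P.field w0 w x‖ ≤ L * (|w0' - w0| + ‖w' - w‖ + ‖x' - x‖) := by
  obtain ⟨M, hM, hfM, hgM⟩ := P.exists_uniform_bound
  set c : ℝ := (Fintype.card (Fin m₁ ⊕ Fin m₂) : ℝ)
  refine ⟨M * (1 + c), by positivity, fun w0 w0' w w' x x' hw0 hw => ?_⟩
  have hf_term : ‖w0' • P.f x' - w0 • P.f x‖ ≤ M * (|w0' - w0| + ‖x' - x‖) := by
    calc _ ≤ |w0' - w0| * ‖P.f x'‖ + |w0| * ‖P.f x' - P.f x‖ := norm_smul_sub_smul_le ..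
      _ ≤ |w0' - w0| * M + 1 * (M * ‖x' - x‖) := by
          gcongr
          exacts [(hfM x').1, norm_sub_le_of_norm_fderiv_le P.hf (fun z => (hfM z).2) _ _]
      _ = _ := by ring
  have hg_term : ∀ i, ‖w' i • P.g i x' - w i • P.g i x‖ ≤ M * (‖w' - w‖ + ‖x' - x‖) := by
    intro i
    have hwi : |w i| ≤ 1 := (PiLp.norm_apply_le w i).trans hw
    have hdi : |w' i - w i| ≤ ‖w' - w‖ := PiLp.norm_apply_le (w' - w) i
    calc _ ≤ |w' i - w i| * ‖P.g i x'‖ + |w i| * ‖P.g i x' - P.g i x‖ :=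
          norm_smul_sub_smul_le ..
      _ ≤ ‖w' - w‖ * M + 1 * (M * ‖x' - x‖) := by
          gcongr
          exacts [(hgM i x').1,
            norm_sub_le_of_norm_fderiv_le (P.hg i) (fun z => (hgM i z).2) _ _]
      _ = _ := by ring
  have hsum : ‖∑ i, w' i • P.g i x' - ∑ i, w i • P.g i x‖
      ≤ c * (M * (‖w' - w‖ + ‖x' - x‖)) := by
    rw [← Finset.sum_sub_distrib]
    refine (norm_sum_le _ _).trans ?_
    simpa [c] using Finset.sum_le_sum fun i (_ : i ∈ Finset.univ) => hg_term i
  calc ‖P.field w0' w' x' - P.field w0 w x‖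
        ≤ ‖w0' • P.f x' - w0 • P.f x‖ + ‖∑ i, w' i • P.g i x' - ∑ i, w i • P.g i x‖ := by
          rw [field, field, add_sub_add_comm]; exact norm_add_le _ _
    _ ≤ M * (|w0' - w0| + ‖x' - x‖) + c * (M * (‖w' - w‖ + ‖x' - x‖)) :=
          add_le_add hf_term hsum
    _ ≤ _ := by
        have : 0 ≤ c := by positivity
        nlinarith [abs_nonneg (w0' - w0), norm_nonneg (w' - w), norm_nonneg (x' - x),
          mul_nonneg hM this]

def fieldLip (P : Setup n m₁ m₂) : ℝ := P.exists_norm_field_sub_le.choose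

theorem fieldLip_nonneg (P : Setup n m₁ m₂) : 0 ≤ P.fieldLip :=
  P.exists_norm_field_sub_le.choose_spec.1

theorem norm_field_sub_le (P : Setup n m₁ m₂) {w0 w0' : ℝ} {w w' : CVec m₁ m₂} (x x' : Euc n)
    (hw0 : |w0| ≤ 1) (hw : ‖w‖ ≤ 1) :
    ‖P.field w0' w' x' - P.field w0 w x‖ ≤ P.fieldLip * (|w0' - w0| + ‖w' - w‖ + ‖x' - x‖) :=
  P.exists_norm_field_sub_le.choose_spec.2 w0 w0' w w' x x' hw0 hw

theorem norm_field_le (P : Setup n m₁ m₂) {w0 : ℝ} {w : CVec m₁ m₂} (x : Euc n)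
    (hw0 : |w0| ≤ 1) (hw : ‖w‖ ≤ 1) : ‖P.field w0 w x‖ ≤ 2 * P.fieldLip := by
  have h := P.norm_field_sub_le x x (w0' := w0) (w' := w) (abs_zero.trans_le zero_le_one)
    (norm_zero.trans_le zero_le_one)
  rw [field_zero, sub_zero, sub_zero, sub_zero, sub_self, norm_zero, add_zero] at h
  nlinarith [P.fieldLip_nonneg]

end Setup

namespace ExtProcess

def velocity (z : ExtProcess P) (t : ℝ) : Euc n := P.field (z.w0 t) (z.w t) (z.y t)

def terminal (z : ExtProcess P) : ℝ × Euc n := (z.y0 z.S, z.y z.S)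

def ctrlDist (z₁ z₂ : ExtProcess P) (t : ℝ) : ℝ := |z₁.w0 t - z₂.w0 t| + ‖z₁.w t - z₂.w t‖

theorem dproc_eq (z₁ z₂ : ExtProcess P) :
    dproc z₁ z₂ = |z₁.S - z₂.S| + ∫ t in Icc 0 (min z₁.S z₂.S), ctrlDist z₁ z₂ t := rfl

theorem ctrlDist_nonneg (z₁ z₂ : ExtProcess P) (t : ℝ) : 0 ≤ ctrlDist z₁ z₂ t := by
  unfold ctrlDist; positivity

theorem ctrlDist_le_add (z₁ z₂ z₃ : ExtProcess P) (t : ℝ) :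
    ctrlDist z₁ z₃ t ≤ ctrlDist z₁ z₂ t + ctrlDist z₂ z₃ t := by
  unfold ctrlDist
  linarith [abs_sub_le (z₁.w0 t) (z₂.w0 t) (z₃.w0 t),
    norm_sub_le_norm_sub_add_norm_sub (z₁.w t) (z₂.w t) (z₃.w t)]

theorem dproc_nonneg (z₁ z₂ : ExtProcess P) : 0 ≤ dproc z₁ z₂ :=
  add_nonneg (abs_nonneg _)
    (setIntegral_nonneg measurableSet_Icc fun t _ => ctrlDist_nonneg _ _ t)

theorem ae_controls_le_one (z : ExtProcess P) {a : ℝ} (ha : a ≤ z.S) :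
    ∀ᵐ t ∂volume.restrict (Icc 0 a), |z.w0 t| ≤ 1 ∧ ‖z.w t‖ ≤ 1 := by
  refine ae_restrict_of_ae_restrict_of_subset (Icc_subset_Icc_right ha) ?_
  filter_upwards [z.hw0_nonneg, z.hw_norm] with t h0 h1
  exact ⟨by rw [abs_of_nonneg h0]; linarith [norm_nonneg (z.w t)], by linarith⟩

theorem integrableOn_w0 (z : ExtProcess P) : IntegrableOn z.w0 (Icc 0 z.S) :=
  Integrable.mono' (integrableOn_const measure_Icc_lt_top.ne) z.hw0_meas
    ((z.ae_controls_le_one le_rfl).mono fun _ ht => ht.1)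

theorem ae_norm_velocity_le (z : ExtProcess P) :
    ∀ᵐ t ∂volume.restrict (Icc 0 z.S), ‖z.velocity t‖ ≤ 2 * P.fieldLip :=
  (z.ae_controls_le_one le_rfl).mono fun _ ht => P.norm_field_le _ ht.1 ht.2

theorem integrableOn_velocity (z : ExtProcess P) : IntegrableOn z.velocity (Icc 0 z.S) :=
  Integrable.mono' (integrableOn_const measure_Icc_lt_top.ne)
    (P.continuous_field.comp_aestronglyMeasurable (z.hw0_meas.prodMk
      (z.hw_meas.prodMk (z.hy_cont.aestronglyMeasurable measurableSet_Icc))))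
    z.ae_norm_velocity_le

theorem ae_ctrlDist_le {z₁ z₂ : ExtProcess P} {a : ℝ} (h₁ : a ≤ z₁.S) (h₂ : a ≤ z₂.S) :
    ∀ᵐ t ∂volume.restrict (Icc 0 a), ctrlDist z₁ z₂ t ≤ 4 := by
  filter_upwards [z₁.ae_controls_le_one h₁, z₂.ae_controls_le_one h₂] with t ht₁ ht₂
  unfold ctrlDist
  linarith [abs_sub (z₁.w0 t) (z₂.w0 t), norm_sub_le (z₁.w t) (z₂.w t)]

theorem integrableOn_ctrlDist {z₁ z₂ : ExtProcess P} {a : ℝ} (h₁ : a ≤ z₁.S) (h₂ : a ≤ z₂.S) :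
    IntegrableOn (ctrlDist z₁ z₂) (Icc 0 a) := by
  have hsub : ∀ z : ExtProcess P, a ≤ z.S →
      volume.restrict (Icc 0 a) ≤ volume.restrict (Icc 0 z.S) :=
    fun z hz => Measure.restrict_mono (Icc_subset_Icc_right hz) le_rfl
  have hw0 := ((z₁.hw0_meas.mono_measure (hsub z₁ h₁)).sub
    (z₂.hw0_meas.mono_measure (hsub z₂ h₂))).norm
  have hw := ((z₁.hw_meas.mono_measure (hsub z₁ h₁)).sub
    (z₂.hw_meas.mono_measure (hsub z₂ h₂))).norm
  refine Integrable.mono' (integrableOn_const measure_Icc_lt_top.ne (C := (4 : ℝ)))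
    (hw0.add hw) ?_
  filter_upwards [ae_ctrlDist_le h₁ h₂] with t ht
  rwa [Real.norm_of_nonneg (ctrlDist_nonneg _ _ t)]

/-- On `[S₂, min S₁ S₃]` the controls of `z₂` carry no information, so only the bound
`ctrlDist ≤ 4` is available there; this costs the extra `4 |S₂ - S₃|`. -/
theorem dproc_le_add (z₁ z₂ z₃ : ExtProcess P) :
    dproc z₁ z₃ ≤ dproc z₁ z₂ + 5 * dproc z₂ z₃ := by
  set m₁₃ := min z₁.S z₃.S
  set m := min m₁₃ z₂.S
  have hm₁₃ : m₁₃ ≤ z₁.S ∧ m₁₃ ≤ z₃.S := ⟨min_le_left _ _, min_le_right _ _⟩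
  have hm : 0 ≤ m ∧ m ≤ m₁₃ ∧ m ≤ z₂.S :=
    ⟨le_min (le_min z₁.hS.le z₃.hS.le) z₂.hS.le, min_le_left _ _, min_le_right _ _⟩
  have hm₁ : m ≤ z₁.S := hm.2.1.trans hm₁₃.1
  have hm₃ : m ≤ z₃.S := hm.2.1.trans hm₁₃.2
  have h_tail : ∫ t in Icc 0 m₁₃, ctrlDist z₁ z₃ t
      ≤ (∫ t in Icc 0 m, ctrlDist z₁ z₃ t) + 4 * (m₁₃ - m) :=
    setIntegral_Icc_le_add_mul hm.1 hm.2.1 (integrableOn_ctrlDist hm₁₃.1 hm₁₃.2)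
      (ae_ctrlDist_le hm₁₃.1 hm₁₃.2)
  have h_tri : ∫ t in Icc 0 m, ctrlDist z₁ z₃ t
      ≤ (∫ t in Icc 0 m, ctrlDist z₁ z₂ t) + ∫ t in Icc 0 m, ctrlDist z₂ z₃ t := by
    rw [← integral_add (integrableOn_ctrlDist hm₁ hm.2.2) (integrableOn_ctrlDist hm.2.2 hm₃)]
    exact setIntegral_mono_on (integrableOn_ctrlDist hm₁ hm₃)
      ((integrableOn_ctrlDist hm₁ hm.2.2).add (integrableOn_ctrlDist hm.2.2 hm₃))
      measurableSet_Icc fun t _ => ctrlDist_le_add z₁ z₂ z₃ t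
  have h_mono : ∀ {z z' : ExtProcess P}, m ≤ min z.S z'.S →
      ∫ t in Icc 0 m, ctrlDist z z' t ≤ ∫ t in Icc 0 (min z.S z'.S), ctrlDist z z' t :=
    fun h => setIntegral_mono_set (integrableOn_ctrlDist (min_le_left _ _) (min_le_right _ _))
      (ae_of_all _ fun t => ctrlDist_nonneg _ _ t) (Icc_subset_Icc_right h).eventuallyLE
  have h₁₂ := h_mono (z := z₁) (z' := z₂) (le_min hm₁ hm.2.2)
  have h₂₃ := h_mono (z := z₂) (z' := z₃) (le_min hm.2.2 hm₃)
  have h_gap : m₁₃ - m ≤ |z₂.S - z₃.S| := by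
    rcases le_total m₁₃ z₂.S with h | h
    · simp only [m, min_eq_left h, sub_self, abs_nonneg]
    · simp only [m, min_eq_right h]
      linarith [hm₁₃.2, le_abs_self (z₃.S - z₂.S), abs_sub_comm z₂.S z₃.S]
  change |z₁.S - z₃.S| + ∫ t in Icc 0 m₁₃, ctrlDist z₁ z₃ t ≤ dproc z₁ z₂ + 5 * dproc z₂ z₃
  rw [dproc_eq z₁ z₂, dproc_eq z₂ z₃]
  linarith [abs_sub_le z₁.S z₂.S z₃.S, abs_nonneg (z₂.S - z₃.S),
    setIntegral_nonneg (μ := volume) measurableSet_Icc fun t (_ : t ∈ Icc 0 (min z₂.S z₃.S)) =>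
      ctrlDist_nonneg z₂ z₃ t]

theorem intervalIntegral_ctrlDist_le {z' z : ExtProcess P} {s T : ℝ} (hs : s ∈ Icc 0 T)
    (h' : T ≤ z'.S) (h : T ≤ z.S) :
    ∫ t in 0..s, ctrlDist z' z t ≤ ∫ t in Icc 0 T, ctrlDist z' z t := by
  rw [integral_Icc_eq_integral_Ioc, ← intervalIntegral.integral_of_le (hs.1.trans hs.2)]
  exact intervalIntegral.integral_mono_interval le_rfl hs.1 hs.2
    (ae_of_all _ fun t => ctrlDist_nonneg z' z t)
    ((integrableOn_ctrlDist h' h).intervalIntegrable_of_mem_Icc ⟨hs.1.trans hs.2, le_rfl⟩)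

theorem abs_y0_sub_le {z' z : ExtProcess P} {T : ℝ} (hT : 0 ≤ T) (h' : T ≤ z'.S)
    (h : T ≤ z.S) : |z'.y0 T - z.y0 T| ≤ ∫ t in Icc 0 T, ctrlDist z' z t := by
  have hw0' := z'.integrableOn_w0.intervalIntegrable_of_mem_Icc ⟨hT, h'⟩
  have hw0 := z.integrableOn_w0.intervalIntegrable_of_mem_Icc ⟨hT, h⟩
  rw [z'.hy0 T ⟨hT, h'⟩, z.hy0 T ⟨hT, h⟩, ← intervalIntegral.integral_sub hw0' hw0]
  refine (intervalIntegral.abs_integral_le_integral_abs hT).trans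
    ((intervalIntegral.integral_mono_on hT (hw0'.sub hw0).abs
      ((integrableOn_ctrlDist h' h).intervalIntegrable_of_mem_Icc ⟨hT, le_rfl⟩)
      fun t _ => le_add_of_nonneg_right (norm_nonneg _)).trans
      (intervalIntegral_ctrlDist_le ⟨hT, le_rfl⟩ h' h))

theorem norm_y_sub_le {z' z : ExtProcess P} {T : ℝ} (hT : 0 ≤ T) (h' : T ≤ z'.S)
    (h : T ≤ z.S) : ‖z'.y T - z.y T‖
      ≤ P.fieldLip * Real.exp (P.fieldLip * T) * ∫ t in Icc 0 T, ctrlDist z' z t := by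
  set L := P.fieldLip
  set δ := ∫ t in Icc 0 T, ctrlDist z' z t
  set u : ℝ → ℝ := fun s => ‖z'.y s - z.y s‖
  have hu : ContinuousOn u (Icc 0 T) :=
    ((z'.hy_cont.mono (Icc_subset_Icc_right h')).sub
      (z.hy_cont.mono (Icc_subset_Icc_right h))).norm
  suffices hgr : ∀ s ∈ Icc 0 T, u s ≤ L * δ + L * ∫ t in 0..s, u t by
    have := le_mul_exp_of_le_add_mul_integral P.fieldLip_nonneg hT hu hgr
    simpa only [mul_comm, mul_assoc, mul_left_comm] using this
  intro s hs
  have hs' : s ∈ Icc 0 z'.S := ⟨hs.1, hs.2.trans h'⟩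
  have hs₀ : s ∈ Icc 0 z.S := ⟨hs.1, hs.2.trans h⟩
  have hD := (integrableOn_ctrlDist h' h).intervalIntegrable_of_mem_Icc hs
  have hui := hu.integrableOn_Icc.intervalIntegrable_of_mem_Icc hs
  have hv' := z'.integrableOn_velocity.intervalIntegrable_of_mem_Icc hs'
  have hv := z.integrableOn_velocity.intervalIntegrable_of_mem_Icc hs₀
  have hpt : ∀ᵐ t ∂volume.restrict (Icc 0 s),
      ‖z'.velocity t - z.velocity t‖ ≤ L * ctrlDist z' z t + L * u t := by
    filter_upwards [z.ae_controls_le_one hs₀.2] with t ht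
    rw [velocity, velocity, ctrlDist, ← mul_add]
    exact P.norm_field_sub_le (z.y t) (z'.y t) ht.1 ht.2
  calc u s = ‖∫ t in 0..s, (z'.velocity t - z.velocity t)‖ := by
        rw [intervalIntegral.integral_sub hv' hv]
        show ‖z'.y s - z.y s‖ = _
        rw [z'.hy s hs', z.hy s hs₀, add_sub_add_left_eq_sub]
        rfl
    _ ≤ ∫ t in 0..s, ‖z'.velocity t - z.velocity t‖ :=
        intervalIntegral.norm_integral_le_integral_norm hs.1
    _ ≤ ∫ t in 0..s, (L * ctrlDist z' z t + L * u t) :=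
        intervalIntegral.integral_mono_ae_restrict hs.1 (hv'.sub hv).norm
          ((hD.const_mul L).add (hui.const_mul L)) hpt
    _ = L * (∫ t in 0..s, ctrlDist z' z t) + L * ∫ t in 0..s, u t := by
        rw [intervalIntegral.integral_add (hD.const_mul L) (hui.const_mul L),
          intervalIntegral.integral_const_mul, intervalIntegral.integral_const_mul]
    _ ≤ L * δ + L * ∫ t in 0..s, u t := by
        gcongr
        · exact P.fieldLip_nonneg
        · exact intervalIntegral_ctrlDist_le hs h' h

theorem exists_dist_terminal_le (z : ExtProcess P) :
    ∃ C, 0 < C ∧ ∀ z' : ExtProcess P, dist z'.terminal z.terminal ≤ C * dproc z' z := by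
  set L := P.fieldLip
  have hL := P.fieldLip_nonneg
  refine ⟨1 + L * Real.exp (L * z.S) + 2 * L, by positivity, fun z' => ?_⟩
  set T := min z'.S z.S
  have hT : 0 ≤ T := le_min z'.hS.le z.hS.le
  set δ := ∫ t in Icc 0 T, ctrlDist z' z t
  have hδ : 0 ≤ δ := setIntegral_nonneg measurableSet_Icc fun t _ => ctrlDist_nonneg z' z t
  have hy0 : |z'.y0 z'.S - z.y0 z.S| ≤ δ + |z'.S - z.S| := by
    have := norm_sub_le_of_eq_integral (B := 1) z.hS.le z'.hS.le
      (fun s hs => (z.hy0 s hs).trans (zero_add _).symm)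
      (fun s hs => (z'.hy0 s hs).trans (zero_add _).symm) z.integrableOn_w0 z'.integrableOn_w0
      ((z.ae_controls_le_one le_rfl).mono fun _ ht => ht.1) ((z'.ae_controls_le_one le_rfl).mono fun _ ht => ht.1)
    simp only [Real.norm_eq_abs, one_mul] at this
    linarith [abs_y0_sub_le hT (min_le_left _ _) (min_le_right _ _) (z' := z') (z := z)]
  have hy : ‖z'.y z'.S - z.y z.S‖ ≤ L * Real.exp (L * z.S) * δ + 2 * L * |z'.S - z.S| := by
    have := norm_sub_le_of_eq_integral z.hS.le z'.hS.le z.hy z'.hy z.integrableOn_velocity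
      z'.integrableOn_velocity z.ae_norm_velocity_le z'.ae_norm_velocity_le
    have hexp : L * Real.exp (L * T) * δ ≤ L * Real.exp (L * z.S) * δ := by
      gcongr; exact min_le_right _ _
    linarith [norm_y_sub_le hT (min_le_left _ _) (min_le_right _ _) (z' := z') (z := z)]
  have hLe : 0 ≤ L * Real.exp (L * z.S) := by positivity
  have hS := abs_nonneg (z'.S - z.S)
  rw [dproc_eq]
  refine max_le ?_ ?_
  · change |z'.y0 z'.S - z.y0 z.S| ≤ _
    nlinarith [mul_nonneg hLe hS, mul_nonneg hLe hδ, mul_nonneg hL hS, mul_nonneg hL hδ]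
  · change ‖z'.y z'.S - z.y z.S‖ ≤ _
    nlinarith [mul_nonneg hLe hS, mul_nonneg hL hδ]

theorem isolated_of_cost_lt {zb z : ExtProcess P} {r : ℝ}
    (hmin : ∀ e ∈ FeasReach zb r, P.Ψ zb.terminal ≤ P.Ψ (e.1, e.2.1))
    (hz : dproc z zb < r / 10) (hcost : P.Ψ z.terminal < P.Ψ zb.terminal) : Isolated z := by
  obtain ⟨C, hC, hCz⟩ := z.exists_dist_terminal_le
  obtain ⟨η, hη, hηΨ⟩ := Metric.eventually_nhds_iff.1
    (P.hΨ.continuous.continuousAt.eventually (eventually_lt_nhds hcost))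
  refine ⟨min (η / C) (r / 2), lt_min (div_pos hη hC) (by linarith [dproc_nonneg z zb]), ?_⟩
  refine eq_empty_iff_forall_notMem.2 ?_
  rintro _ ⟨⟨z', hz'_strict, hz'z, rfl⟩, hz'_target, hz'_energy⟩
  have hz'zb : dproc z' zb < r := by
    linarith [dproc_le_add z' z zb, min_le_right (η / C) (r / 2)]
  have hcompete := hmin _ ⟨⟨z', hz'_strict, hz'zb, rfl⟩, hz'_target, hz'_energy⟩
  have hbeat : P.Ψ z'.terminal < P.Ψ zb.terminal := hηΨ <| by
    calc dist z'.terminal z.terminal ≤ C * dproc z' z := hCz z'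
      _ < C * (η / C) := mul_lt_mul_of_pos_left (hz'z.trans_le (min_le_left _ _)) hC
      _ = η := mul_div_cancel₀ η hC.ne'
  exact absurd hcompete (not_le.2 hbeat)

end ExtProcess

/-- Proposition 4.1: a local strict-sense minimizer at which there is a
local infimum gap is the `d`-limit of a sequence of isolated feasible extended processes;
in particular the corresponding endpoints converge. -/
theorem stmt15 (zb : ExtProcess P)
    (hmin : IsLocalStrictSenseMinimizer zb) (hgap : HasStrictSenseGap zb) :
    ∃ zs : ℕ → ExtProcess P,
      (∀ k, Feasible (zs k) ∧ Isolated (zs k)) ∧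
      Filter.Tendsto (fun k => dproc (zs k) zb) Filter.atTop (nhds 0) ∧
      Filter.Tendsto (fun k => ((zs k).y0 (zs k).S, (zs k).y (zs k).S))
        Filter.atTop (nhds (zb.y0 zb.S, zb.y zb.S)) := by
  obtain ⟨-, -, r, hr, hmin⟩ := hmin
  choose zs hfeas hdist hcost using fun k : ℕ =>
    hgap (min (1 / (k + 1)) (r / 10)) (lt_min (by positivity) (by linarith))
  obtain ⟨C, -, hC⟩ := zb.exists_dist_terminal_le
  have hd : Tendsto (fun k => dproc (zs k) zb) atTop (nhds 0) :=
    squeeze_zero (fun _ => ExtProcess.dproc_nonneg _ _)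
      (fun k => (hdist k).le.trans (min_le_left _ _)) tendsto_one_div_add_atTop_nhds_zero_nat
  refine ⟨zs, fun k => ⟨hfeas k, ?_⟩, hd, ?_⟩
  · exact ExtProcess.isolated_of_cost_lt hmin ((hdist k).trans_le (min_le_right _ _)) (hcost k)
  · exact tendsto_iff_dist_tendsto_zero.2 <| squeeze_zero (fun _ => dist_nonneg)
      (fun k => hC (zs k)) (by simpa using hd.const_mul C)
end
end
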